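/- arXiv:2407.03475 — 9 statements merged into one kernel-verified Lean document; each statement's English description precedes it below -/
import Mathlib

section
/- Let L ≥ 1 be an integer and λ, ρ > 0. Let w : [0, ∞) → ℝ be differentiable with ẇ(t) = λ w(t)^{3−1/L} − (λ/ρ) w(t)³ for all t ≥ 0 and w(0) = ε, where 0 < ε < ρ^L. Then w(t) ∈ (0, ρ^L) for all t, w is strictly increasing, and lim_{t→∞} w(t) = ρ^L. -/
/-! The vector field factors as `f x = (λ/ρ) x^(3-1/L) (ρ - x^(1/L))`, so it is positive on
`(0, ρ^L)`. Concavity of `x ↦ x^(1/L)` gives the one-sided bound `f x ≤ K (ρ^L - x)` for every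
`x > 0`, so by Grönwall `ρ^L - w` decays at most exponentially and never reaches `0`; together
with `w' = f w > 0` this keeps `w` in `(0, ρ^L)` past any would-be first exit time. Hence `w` is
increasing and bounded, so it converges, and a limit of a trajectory of an autonomous ODE is a zero
of the vector field, which in `(0, ρ^L]` can only be `ρ^L`. -/

open Set Filter Topology

theorem mapsTo_Ici_of_forall_Ico {α β : Type*} [ConditionallyCompleteLinearOrder α]
    [TopologicalSpace α] [OrderTopology α] [TopologicalSpace β] {w : α → β} {U : Set β} {a : α}
    (hU : IsOpen U) (hw : ContinuousOn w (Ici a))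
    (hstep : ∀ T ∈ Ici a, MapsTo w (Ico a T) U → w T ∈ U) : MapsTo w (Ici a) U := by
  by_contra hexit
  obtain ⟨t, ht, htU⟩ := not_forall₂.mp hexit
  set S := Ici a ∩ w ⁻¹' Uᶜ
  have hS : IsClosed S := hw.preimage_isClosed_of_isClosed isClosed_Ici hU.isClosed_compl
  have hbdd : BddBelow S := ⟨a, fun _ hs => hs.1⟩
  obtain ⟨hT, hTU⟩ := hS.csInf_mem ⟨t, ht, htU⟩ hbdd
  exact hTU <| hstep _ hT fun s hs =>
    by_contra fun hsU => hs.2.not_ge (csInf_le hbdd ⟨hs.1, hsU⟩)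

theorem lt_of_hasDerivAt_le_mul_sub {w w' : ℝ → ℝ} {a b c K : ℝ} (hab : a ≤ b)
    (hw : ∀ t ∈ Icc a b, HasDerivAt w (w' t) t) (hbound : ∀ t ∈ Ico a b, w' t ≤ K * (c - w t))
    (ha : w a < c) : w b < c := by
  have hgron := le_gronwallBound_of_liminf_deriv_right_le (f := fun t => w t - c) (f' := w')
    (δ := w a - c) (K := -K) (ε := 0) (a := a) (b := b)
    (fun t ht => ((hw t ht).sub_const c).continuousAt.continuousWithinAt)
    (fun t ht _ hr => ((hw t (Ico_subset_Icc_self ht)).sub_const c).hasDerivWithinAt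
      |>.liminf_right_slope_le hr) le_rfl
    (fun t ht => by linarith [hbound t ht]) b ⟨hab, le_rfl⟩
  rw [gronwallBound_ε0] at hgron
  have : (w a - c) * Real.exp (-K * (b - a)) < 0 :=
    mul_neg_of_neg_of_pos (by linarith) (Real.exp_pos _)
  linarith

theorem tendsto_atTop_of_hasDerivAt_of_le {w w' : ℝ → ℝ} {δ : ℝ} (hδ : 0 < δ)
    (hw : ∀ᶠ t in atTop, HasDerivAt w (w' t) t ∧ δ ≤ w' t) : Tendsto w atTop atTop := by
  obtain ⟨t₀, ht₀⟩ := eventually_atTop.mp hw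
  have hgrowth : ∀ t ≥ t₀, w t₀ + δ * (t - t₀) ≤ w t := fun t ht => by
    have := (convex_Ici t₀).mul_sub_le_image_sub_of_le_deriv
      (fun s hs => (ht₀ s hs).1.continuousAt.continuousWithinAt)
      (fun s hs => (ht₀ s (interior_subset hs)).1.differentiableAt.differentiableWithinAt)
      (fun s hs => (ht₀ s (interior_subset hs)).1.deriv ▸ (ht₀ s (interior_subset hs)).2)
      t₀ self_mem_Ici t ht ht
    linarith
  refine tendsto_atTop_mono' atTop (eventually_atTop.mpr ⟨t₀, hgrowth⟩) ?_
  exact tendsto_atTop_add_const_left _ _ <|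
    (tendsto_atTop_add_const_right _ _ tendsto_id).const_mul_atTop hδ

theorem eq_zero_of_tendsto_of_hasDerivAt {w w' : ℝ → ℝ} {l m : ℝ}
    (hw : ∀ᶠ t in atTop, HasDerivAt w (w' t) t) (hl : Tendsto w atTop (𝓝 l))
    (hm : Tendsto w' atTop (𝓝 m)) : m = 0 := by
  rcases lt_trichotomy m 0 with hneg | hzero | hpos
  · have hdiv : Tendsto (-w) atTop atTop := by
      refine tendsto_atTop_of_hasDerivAt_of_le (w' := -w') (by linarith : 0 < -(m / 2)) ?_
      filter_upwards [hw, hm.eventually (ge_mem_nhds (by linarith : m < m / 2))] with t ht hmt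
      exact ⟨ht.neg, by rw [Pi.neg_apply]; linarith⟩
    exact absurd hdiv (not_tendsto_atTop_of_tendsto_nhds hl.neg)
  · exact hzero
  · have hdiv : Tendsto w atTop atTop := by
      refine tendsto_atTop_of_hasDerivAt_of_le (w' := w') (half_pos hpos) ?_
      filter_upwards [hw, hm.eventually (le_mem_nhds (half_lt_self hpos))] with t ht hmt
      exact ⟨ht, hmt⟩
    exact absurd hdiv (not_tendsto_atTop_of_tendsto_nhds hl)

theorem MonotoneOn.exists_tendsto_atTop {w : ℝ → ℝ} {a : ℝ} (hw : MonotoneOn w (Ici a))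
    (hbdd : BddAbove (w '' Ici a)) : ∃ l, Tendsto w atTop (𝓝 l) := by
  refine ⟨_, tendsto_comp_val_Ici_atTop.mp <|
    tendsto_atTop_ciSup (monotoneOn_iff_monotone.mp hw) ?_⟩
  rwa [← image_eq_range]

theorem rpow_le_rpow_add_tangent {p x y : ℝ} (hp₀ : 0 ≤ p) (hp₁ : p ≤ 1) (hx : 0 < x)
    (hy : 0 ≤ y) : y ^ p ≤ x ^ p + p * x ^ (p - 1) * (y - x) := by
  have hs : -1 ≤ (y - x) / x := by rw [le_div_iff₀ hx]; linarith
  have hy' : y = x * (1 + (y - x) / x) := by field_simp; ring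
  calc y ^ p = x ^ p * (1 + (y - x) / x) ^ p := by
        conv_lhs => rw [hy']
        exact Real.mul_rpow hx.le (by linarith)
    _ ≤ x ^ p * (1 + p * ((y - x) / x)) := by
        gcongr; exact rpow_one_add_le_one_add_mul_self hs hp₀ hp₁
    _ = x ^ p + p * x ^ (p - 1) * (y - x) := by rw [Real.rpow_sub_one hx.ne']; field_simp

noncomputable def jepaField (L : ℕ) (lam rho x : ℝ) : ℝ :=
  lam * x ^ ((3 : ℝ) - 1 / L) - (lam / rho) * x ^ 3

section jepaField

variable {L : ℕ} {lam rho x : ℝ}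

theorem jepaField_eq_mul_sub (hrho : rho ≠ 0) (hx : 0 < x) :
    jepaField L lam rho x = lam / rho * x ^ ((3 : ℝ) - 1 / L) * (rho - x ^ (1 / L : ℝ)) := by
  have hcube : x ^ 3 = x ^ ((3 : ℝ) - 1 / L) * x ^ (1 / L : ℝ) := by
    rw [← Real.rpow_add hx, sub_add_cancel, ← Real.rpow_natCast]; norm_num
  rw [jepaField, hcube]
  field_simp

theorem pow_rpow_one_div_natCast (hL : L ≠ 0) (hrho : 0 ≤ rho) :
    (rho ^ L) ^ (1 / L : ℝ) = rho := by
  rw [one_div, Real.pow_rpow_inv_natCast hrho hL]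

theorem jepaField_pos (hL : L ≠ 0) (hlam : 0 < lam) (hrho : 0 < rho) (hx : 0 < x)
    (hxρ : x < rho ^ L) : 0 < jepaField L lam rho x := by
  have hroot : x ^ (1 / L : ℝ) < rho := by
    calc x ^ (1 / L : ℝ) < (rho ^ L) ^ (1 / L : ℝ) :=
          Real.rpow_lt_rpow hx.le hxρ (by positivity)
      _ = rho := pow_rpow_one_div_natCast hL hrho.le
  rw [jepaField_eq_mul_sub hrho.ne' hx]
  have := Real.rpow_pos_of_pos hx ((3 : ℝ) - 1 / L)
  have := sub_pos.mpr hroot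
  positivity

theorem jepaField_le_mul_sub (hL : L ≠ 0) (hlam : 0 < lam) (hrho : 0 < rho) (hx : 0 < x) :
    jepaField L lam rho x ≤ lam * (rho ^ L) ^ 2 / (rho * L) * (rho ^ L - x) := by
  have hp : (1 / L : ℝ) ≤ 1 := by
    rw [div_le_one (by positivity)]; exact_mod_cast Nat.one_le_iff_ne_zero.mpr hL
  have htangent := rpow_le_rpow_add_tangent (by positivity) hp hx (pow_nonneg hrho.le L)
  rw [pow_rpow_one_div_natCast hL hrho.le] at htangent
  have hsq : x ^ ((3 : ℝ) - 1 / L) * x ^ (1 / L - 1 : ℝ) = x ^ 2 := by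
    rw [← Real.rpow_add hx, ← Real.rpow_natCast]; norm_num
  calc jepaField L lam rho x
      = lam / rho * x ^ ((3 : ℝ) - 1 / L) * (rho - x ^ (1 / L : ℝ)) :=
        jepaField_eq_mul_sub hrho.ne' hx
    _ ≤ lam / rho * x ^ ((3 : ℝ) - 1 / L) * (1 / L * x ^ (1 / L - 1 : ℝ) * (rho ^ L - x)) := by
        gcongr; linarith
    _ = lam / (rho * L) * (x ^ 2 * (rho ^ L - x)) := by rw [← hsq]; field_simp
    _ ≤ lam / (rho * L) * ((rho ^ L) ^ 2 * (rho ^ L - x)) := by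
        have hc : 0 ≤ rho ^ L + x := by positivity
        refine mul_le_mul_of_nonneg_left ?_ (by positivity)
        nlinarith [mul_nonneg (sq_nonneg (rho ^ L - x)) hc]
    _ = lam * (rho ^ L) ^ 2 / (rho * L) * (rho ^ L - x) := by ring

theorem continuousAt_jepaField (hx : 0 < x) : ContinuousAt (jepaField L lam rho) x := by
  unfold jepaField
  fun_prop (disch := exact Or.inl hx.ne')

end jepaField

section trajectory

variable {L : ℕ} {lam rho : ℝ} {w : ℝ → ℝ}

theorem mapsTo_Ioo_of_jepa_flow (hL : L ≠ 0) (hlam : 0 < lam) (hrho : 0 < rho)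
    (hflow : ∀ t ∈ Ici (0 : ℝ), HasDerivAt w (jepaField L lam rho (w t)) t)
    (h0 : w 0 ∈ Ioo 0 (rho ^ L)) : MapsTo w (Ici 0) (Ioo 0 (rho ^ L)) := by
  have hcont : ContinuousOn w (Ici 0) := fun t ht => (hflow t ht).continuousAt.continuousWithinAt
  refine mapsTo_Ici_of_forall_Ico isOpen_Ioo hcont fun T hT hbefore => ?_
  have hmono : MonotoneOn w (Icc 0 T) := by
    refine monotoneOn_of_hasDerivWithinAt_nonneg (f' := fun t => jepaField L lam rho (w t))
      (convex_Icc 0 T) (hcont.mono Icc_subset_Ici_self) (fun t ht => ?_) fun t ht => ?_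
    · exact (hflow t (interior_subset ht).1).hasDerivWithinAt
    · rw [interior_Icc] at ht
      have hwt := hbefore ⟨ht.1.le, ht.2⟩
      exact (jepaField_pos hL hlam hrho hwt.1 hwt.2).le
  refine ⟨h0.1.trans_le (hmono ⟨le_rfl, hT⟩ ⟨hT, le_rfl⟩ hT), ?_⟩
  exact lt_of_hasDerivAt_le_mul_sub hT (fun t ht => hflow t ht.1)
    (fun t ht => jepaField_le_mul_sub hL hlam hrho (hbefore ht).1) h0.2

theorem strictMonoOn_of_jepa_flow (hL : L ≠ 0) (hlam : 0 < lam) (hrho : 0 < rho)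
    (hflow : ∀ t ∈ Ici (0 : ℝ), HasDerivAt w (jepaField L lam rho (w t)) t)
    (hinv : MapsTo w (Ici 0) (Ioo 0 (rho ^ L))) : StrictMonoOn w (Ici 0) :=
  strictMonoOn_of_hasDerivWithinAt_pos (convex_Ici 0)
    (fun t ht => (hflow t ht).continuousAt.continuousWithinAt)
    (fun t ht => (hflow t (interior_subset ht)).hasDerivWithinAt)
    fun _ ht => jepaField_pos hL hlam hrho (hinv (interior_subset ht)).1
      (hinv (interior_subset ht)).2

theorem tendsto_of_jepa_flow (hL : L ≠ 0) (hlam : 0 < lam) (hrho : 0 < rho)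
    (hflow : ∀ t ∈ Ici (0 : ℝ), HasDerivAt w (jepaField L lam rho (w t)) t)
    (hinv : MapsTo w (Ici 0) (Ioo 0 (rho ^ L))) (hmono : MonotoneOn w (Ici 0)) :
    Tendsto w atTop (𝓝 (rho ^ L)) := by
  obtain ⟨l, hl⟩ := hmono.exists_tendsto_atTop
    ⟨rho ^ L, forall_mem_image.2 fun t ht => (hinv ht).2.le⟩
  have hl_pos : 0 < l := (hinv self_mem_Ici).1.trans_le <| ge_of_tendsto hl <|
    eventually_atTop.2 ⟨0, fun t ht => hmono self_mem_Ici ht ht⟩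
  have hl_le : l ≤ rho ^ L :=
    le_of_tendsto hl <| eventually_atTop.2 ⟨0, fun _ ht => (hinv ht).2.le⟩
  have hequilibrium : jepaField L lam rho l = 0 :=
    eq_zero_of_tendsto_of_hasDerivAt (eventually_atTop.2 ⟨0, hflow⟩) hl
      ((continuousAt_jepaField hl_pos).tendsto.comp hl)
  have hl_eq : l = rho ^ L := hl_le.eq_of_not_lt fun hlt =>
    (jepaField_pos hL hlam hrho hl_pos hlt).ne' hequilibrium
  rwa [hl_eq] at hl

end trajectory

/-- **JEPA scalar dynamics: fixed point and monotone convergence.**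
Let `L ≥ 1`, `λ, ρ > 0` and let `w` solve `ẇ = λ w^{3-1/L} - (λ/ρ) w³` on `[0,∞)`
with `w 0 = ε`, `0 < ε < ρ^L`.  Then `w t ∈ (0, ρ^L)` for all `t ≥ 0`, `w` is
strictly increasing on `[0,∞)`, and `w t → ρ^L` as `t → ∞`. -/
theorem jepa_fixed_point (L : ℕ) (hL : 1 ≤ L) (lam rho eps : ℝ)
    (hlam : 0 < lam) (hrho : 0 < rho)
    (w : ℝ → ℝ)
    (hode : ∀ t ∈ Ici (0 : ℝ),
      HasDerivAt w (lam * w t ^ ((3 : ℝ) - 1 / L) - (lam / rho) * w t ^ 3) t)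
    (heps : 0 < eps) (heps' : eps < rho ^ L) (hinit : w 0 = eps) :
    (∀ t ∈ Ici (0 : ℝ), w t ∈ Ioo 0 (rho ^ L)) ∧
    StrictMonoOn w (Ici (0 : ℝ)) ∧
    Tendsto w atTop (nhds (rho ^ L)) := by
  have hL0 : L ≠ 0 := Nat.one_le_iff_ne_zero.mp hL
  have hflow : ∀ t ∈ Ici (0 : ℝ), HasDerivAt w (jepaField L lam rho (w t)) t := hode
  have hinv := mapsTo_Ioo_of_jepa_flow hL0 hlam hrho hflow (hinit ▸ ⟨heps, heps'⟩)
  have hmono := strictMonoOn_of_jepa_flow hL0 hlam hrho hflow hinv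
  exact ⟨hinv, hmono, tendsto_of_jepa_flow hL0 hlam hrho hflow hinv hmono.monotoneOn⟩
end

section
/- Fix λ, ρ > 0 and ε > 0. For each integer L ≥ 1, let w_L : [0, ∞) → ℝ be a differentiable solution of the depth-L MAE dynamics ẇ_L(t) = λ w_L(t)^{2−1/L} − (λ/ρ) w_L(t)³ with w_L(0) = ε and w_L(t) > 0 for all t, and let w : [0, ∞) → ℝ be a differentiable solution of the depth-1 JEPA dynamics ẇ(t) = λ w(t)² − (λ/ρ) w(t)³ with w(0) = ε and w(t) > 0 for all t. Then for every t ≥ 0, lim_{L→∞} w_L(t) = w(t); that is, the dynamics of an infinite-depth MAE model match those of a 1-layer JEPA model. -/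
/-!
Both dynamics are instances of `ẇ = λ w^q - (λ/ρ) w³ = (λ/ρ) w^q (ρ - w^(3-q))` with `q ≤ 2`
(MAE of depth `L`: `q = 2 - 1/L`; JEPA of depth one: `q = 2`). As `3 - q ≥ 1`, this field is
positive below `min ρ 1` and negative above `max ρ 1`, so every positive solution started at `ε`
stays in the compact interval `[min ε (min ρ 1), max ε (max ρ 1)] ⊂ (0, ∞)`. On it the fields for
`q = 2 - 1/L` converge uniformly to the Lipschitz field for `q = 2`, and Gronwall's inequality
turns this into convergence of the solutions.
-/

open Set Filter Topology NNReal

theorem image_le_of_deriv_neg_above {f f' : ℝ → ℝ} {a M : ℝ}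
    (hf : ∀ t ∈ Ici a, HasDerivAt f (f' t) t) (ha : f a ≤ M)
    (hneg : ∀ t ∈ Ici a, M < f t → f' t < 0) : ∀ t ∈ Ici a, f t ≤ M := by
  intro t ht
  -- The fencing theorem needs a strict sign at the barrier itself, so use the barriers `M + δ`.
  refine le_of_forall_pos_le_add fun δ hδ => ?_
  refine image_le_of_deriv_right_lt_deriv_boundary (B := fun _ => M + δ)
    (fun τ hτ => (hf τ hτ.1).continuousAt.continuousWithinAt)
    (fun τ hτ => (hf τ hτ.1).hasDerivWithinAt) (by linarith) (fun _ => hasDerivAt_const _ _)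
    (fun τ hτ _ => hneg τ hτ.1 (by linarith)) ⟨ht, le_rfl⟩

theorem le_image_of_deriv_pos_below {f f' : ℝ → ℝ} {a m : ℝ}
    (hf : ∀ t ∈ Ici a, HasDerivAt f (f' t) t) (ha : m ≤ f a)
    (hpos : ∀ t ∈ Ici a, f t < m → 0 < f' t) : ∀ t ∈ Ici a, m ≤ f t := by
  intro t ht
  exact le_of_neg_le_neg <| image_le_of_deriv_neg_above (fun τ hτ => (hf τ hτ).neg)
    (neg_le_neg ha) (fun τ hτ hτm => neg_neg_of_pos (hpos τ hτ (lt_of_neg_lt_neg hτm))) t ht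

theorem tendsto_of_tendstoUniformlyOn_of_hasDerivAt {E ι : Type*} [NormedAddCommGroup E]
    [NormedSpace ℝ E] {l : Filter ι} {v : E → E} {V : ι → E → E} {s : Set E} {K : ℝ≥0}
    {f : ι → ℝ → E} {g : ℝ → E} {a b : ℝ}
    (hv : LipschitzOnWith K v s) (hV : TendstoUniformlyOn V v l s)
    (hf : ∀ᶠ i in l, ∀ t ∈ Icc a b, HasDerivAt (f i) (V i (f i t)) t)
    (hfs : ∀ᶠ i in l, ∀ t ∈ Icc a b, f i t ∈ s) (hfa : ∀ᶠ i in l, f i a = g a)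
    (hg : ∀ t ∈ Icc a b, HasDerivAt g (v (g t)) t) (hgs : ∀ t ∈ Icc a b, g t ∈ s) :
    ∀ t ∈ Icc a b, Tendsto (fun i => f i t) l (𝓝 (g t)) := by
  intro t ht
  rw [Metric.tendsto_nhds]
  intro η hη
  have hbound : Tendsto (fun ε => gronwallBound 0 K ε (t - a)) (𝓝[>] 0) (𝓝 0) := by
    simpa only [gronwallBound_ε0_δ0] using
      ((gronwallBound_continuous_ε 0 K (t - a)).tendsto 0).mono_left nhdsWithin_le_nhds
  obtain ⟨ε, hεη, hε⟩ := ((hbound.eventually (gt_mem_nhds hη)).and self_mem_nhdsWithin).exists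
  filter_upwards [Metric.tendstoUniformlyOn_iff.1 hV ε hε, hf, hfs, hfa]
    with i hVi hfi hfsi hfai
  have hIco : Ico a b ⊆ Icc a b := Ico_subset_Icc_self
  calc dist (f i t) (g t) ≤ gronwallBound 0 K (ε + 0) (t - a) :=
        dist_le_of_approx_trajectories_ODE_of_mem (v := fun _ => v) (s := fun _ => s)
          (fun _ _ => hv) (fun τ hτ => (hfi τ hτ).continuousAt.continuousWithinAt)
          (fun τ hτ => (hfi τ (hIco hτ)).hasDerivWithinAt)
          (fun τ hτ => by rw [dist_comm]; exact (hVi _ (hfsi τ (hIco hτ))).le)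
          (fun τ hτ => hfsi τ (hIco hτ))
          (fun τ hτ => (hg τ hτ).continuousAt.continuousWithinAt)
          (fun τ hτ => (hg τ (hIco hτ)).hasDerivWithinAt) (fun _ _ => (dist_self _).le)
          (fun τ hτ => hgs τ (hIco hτ)) (by rw [hfai, dist_self]) t ht
    _ < η := by rwa [add_zero]

noncomputable def powerFlow (lam rho q x : ℝ) : ℝ := lam * x ^ q - lam / rho * x ^ 3

section powerFlow

variable {lam rho q x : ℝ}

theorem powerFlow_two (lam rho : ℝ) :
    powerFlow lam rho 2 = fun x => lam * x ^ 2 - lam / rho * x ^ 3 := by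
  funext x
  rw [powerFlow, Real.rpow_two]

theorem powerFlow_eq_mul_sub (hrho : 0 < rho) (hx : 0 < x) :
    powerFlow lam rho q x = lam / rho * x ^ q * (rho - x ^ (3 - q)) := by
  have hsplit : x ^ q * x ^ (3 - q) = x ^ 3 := by
    rw [← Real.rpow_add hx, add_sub_cancel, Real.rpow_ofNat]
  rw [powerFlow, ← hsplit]
  field_simp

theorem powerFlow_neg_of_max_lt (hlam : 0 < lam) (hrho : 0 < rho) (hq : q ≤ 2)
    (hx : max rho 1 < x) : powerFlow lam rho q x < 0 := by
  have hx0 : 0 < x := lt_of_le_of_lt (le_max_right _ _) hx |>.trans' one_pos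
  have hx1 : 1 ≤ x := (le_max_right _ _).trans hx.le
  have hxq : x ≤ x ^ (3 - q) := by
    simpa using Real.rpow_le_rpow_of_exponent_le hx1 (by linarith : (1 : ℝ) ≤ 3 - q)
  rw [powerFlow_eq_mul_sub hrho hx0]
  exact mul_neg_of_pos_of_neg (by positivity) (by linarith [le_max_left rho 1])

theorem powerFlow_pos_of_lt_min (hlam : 0 < lam) (hrho : 0 < rho) (hq : q ≤ 2) (hx0 : 0 < x)
    (hx : x < min rho 1) : 0 < powerFlow lam rho q x := by
  have hx1 : x ≤ 1 := hx.le.trans (min_le_right _ _)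
  have hxq : x ^ (3 - q) ≤ x := by
    simpa using Real.rpow_le_rpow_of_exponent_ge hx0 hx1 (by linarith : (1 : ℝ) ≤ 3 - q)
  rw [powerFlow_eq_mul_sub hrho hx0]
  exact mul_pos (by positivity) (by linarith [min_le_left rho 1])

end powerFlow

theorem mem_Icc_of_hasDerivAt_powerFlow {lam rho q a : ℝ} {f : ℝ → ℝ} (hlam : 0 < lam)
    (hrho : 0 < rho) (hq : q ≤ 2) (hf : ∀ t ∈ Ici a, HasDerivAt f (powerFlow lam rho q (f t)) t)
    (hpos : ∀ t ∈ Ici a, 0 < f t) :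
    ∀ t ∈ Ici a, f t ∈ Icc (min (f a) (min rho 1)) (max (f a) (max rho 1)) := by
  intro t ht
  refine ⟨le_image_of_deriv_pos_below hf (min_le_left _ _) (fun τ hτ hτm => ?_) t ht,
    image_le_of_deriv_neg_above hf (le_max_left _ _) (fun τ hτ hτM => ?_) t ht⟩
  · exact powerFlow_pos_of_lt_min hlam hrho hq (hpos τ hτ) (hτm.trans_le (min_le_right _ _))
  · exact powerFlow_neg_of_max_lt hlam hrho hq ((le_max_right _ _).trans_lt hτM)

theorem tendstoUniformlyOn_powerFlow {ι : Type*} {l : Filter ι} {lam rho q₀ : ℝ} {q : ι → ℝ}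
    {s : Set ℝ} (hq : Tendsto q l (𝓝 q₀)) (hq₀ : 0 < q₀) (hs : IsCompact s) :
    TendstoUniformlyOn (fun i => powerFlow lam rho (q i)) (powerFlow lam rho q₀) l s := by
  set U := Icc (q₀ / 2) (2 * q₀)
  have hU : U ∈ 𝓝 q₀ := Icc_mem_nhds (by linarith) (by linarith)
  have hcont : ContinuousOn (fun p : ℝ × ℝ => powerFlow lam rho p.1 p.2) (U ×ˢ s) := by
    intro p hp
    have hexp : 0 < p.1 := lt_of_lt_of_le (by linarith) hp.1.1
    exact ((continuousAt_const.mul (continuousAt_snd.rpow continuousAt_fst (Or.inr hexp))).sub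
      (by fun_prop)).continuousWithinAt
  have hunif := (isCompact_Icc.prod hs).uniformContinuousOn_of_continuous hcont
    |>.tendstoUniformlyOn (F := fun p x => powerFlow lam rho p x) (mem_of_mem_nhds hU)
  rw [nhdsWithin_eq_nhds.2 hU] at hunif
  exact fun u hu => hq.eventually (hunif u hu)

theorem mae_infinite_depth_eq_jepa_depth_one_general (lam rho eps : ℝ)
    (hlam : 0 < lam) (hrho : 0 < rho)
    (wL : ℕ → ℝ → ℝ) (w : ℝ → ℝ)
    (hLode : ∀ L : ℕ, 1 ≤ L → ∀ t ∈ Ici (0 : ℝ),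
      HasDerivAt (wL L) (lam * wL L t ^ ((2 : ℝ) - 1 / L) - (lam / rho) * wL L t ^ 3) t)
    (hLinit : ∀ L : ℕ, 1 ≤ L → wL L 0 = eps)
    (hLpos : ∀ L : ℕ, 1 ≤ L → ∀ t ∈ Ici (0 : ℝ), 0 < wL L t)
    (hode : ∀ t ∈ Ici (0 : ℝ),
      HasDerivAt w (lam * w t ^ 2 - (lam / rho) * w t ^ 3) t)
    (hinit : w 0 = eps)
    (hpos : ∀ t ∈ Ici (0 : ℝ), 0 < w t) :
    ∀ t ∈ Ici (0 : ℝ), Tendsto (fun L : ℕ => wL L t) atTop (nhds (w t)) := by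
  intro t ht
  have hjepa : ∀ τ ∈ Ici (0 : ℝ), HasDerivAt w (powerFlow lam rho 2 (w τ)) τ := by
    rw [powerFlow_two]
    exact hode
  have hw_mem := hinit ▸ mem_Icc_of_hasDerivAt_powerFlow hlam hrho le_rfl hjepa hpos
  have hwL_mem : ∀ L : ℕ, 1 ≤ L → ∀ τ ∈ Ici (0 : ℝ),
      wL L τ ∈ Icc (min eps (min rho 1)) (max eps (max rho 1)) := fun L hL =>
    hLinit L hL ▸ mem_Icc_of_hasDerivAt_powerFlow hlam hrho (sub_le_self _ (by positivity))
      (hLode L hL) (hLpos L hL)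
  obtain ⟨K, hK⟩ : ∃ K, LipschitzOnWith K (powerFlow lam rho 2)
      (Icc (min eps (min rho 1)) (max eps (max rho 1))) := by
    rw [powerFlow_two]
    exact (ContDiff.locallyLipschitz (𝕂 := ℝ) (by fun_prop)).locallyLipschitzOn
      |>.exists_lipschitzOnWith_of_compact isCompact_Icc
  have hdepth : Tendsto (fun L : ℕ => (2 : ℝ) - 1 / L) atTop (𝓝 2) := by
    simpa using tendsto_const_nhds.sub (tendsto_one_div_atTop_nhds_zero_nat (𝕜 := ℝ))
  have hL : ∀ᶠ L : ℕ in atTop, 1 ≤ L := eventually_ge_atTop 1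
  exact tendsto_of_tendstoUniformlyOn_of_hasDerivAt hK
    (tendstoUniformlyOn_powerFlow hdepth two_pos isCompact_Icc)
    (hL.mono fun L hL τ hτ => hLode L hL τ hτ.1) (hL.mono fun L hL τ hτ => hwL_mem L hL τ hτ.1)
    (hL.mono fun L hL => (hLinit L hL).trans hinit.symm) (fun τ hτ => hjepa τ hτ.1)
    (fun τ hτ => hw_mem τ hτ.1) t ⟨ht, le_rfl⟩

/-- **Infinite-depth MAE matches 1-layer JEPA.**
Fix `λ, ρ, ε > 0`.  If for each `L ≥ 1`, `wL L` is a positive differentiable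
solution of the depth-`L` MAE dynamics `ẇ = λ w^{2-1/L} - (λ/ρ) w³` with
`wL L 0 = ε`, and `w` is a positive differentiable solution of the depth-1
JEPA dynamics `ẇ = λ w² - (λ/ρ) w³` with `w 0 = ε`, then for every `t ≥ 0`,
`wL L t → w t` as `L → ∞`. -/
theorem mae_infinite_depth_eq_jepa_depth_one (lam rho eps : ℝ)
    (hlam : 0 < lam) (hrho : 0 < rho) (heps : 0 < eps)
    (wL : ℕ → ℝ → ℝ) (w : ℝ → ℝ)
    (hLode : ∀ L : ℕ, 1 ≤ L → ∀ t ∈ Ici (0 : ℝ),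
      HasDerivAt (wL L) (lam * wL L t ^ ((2 : ℝ) - 1 / L) - (lam / rho) * wL L t ^ 3) t)
    (hLinit : ∀ L : ℕ, 1 ≤ L → wL L 0 = eps)
    (hLpos : ∀ L : ℕ, 1 ≤ L → ∀ t ∈ Ici (0 : ℝ), 0 < wL L t)
    (hode : ∀ t ∈ Ici (0 : ℝ),
      HasDerivAt w (lam * w t ^ 2 - (lam / rho) * w t ^ 3) t)
    (hinit : w 0 = eps)
    (hpos : ∀ t ∈ Ici (0 : ℝ), 0 < w t) :
    ∀ t ∈ Ici (0 : ℝ), Tendsto (fun L : ℕ => wL L t) atTop (nhds (w t)) :=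
  mae_infinite_depth_eq_jepa_depth_one_general lam rho eps hlam hrho wL w hLode hLinit hLpos hode
    hinit hpos
end

section
/- Let L ≥ 1 be an integer and λ, ρ > 0. Let w : [0, ∞) → ℝ be differentiable with ẇ(t) = λ w(t)^{3−1/L} − (λ/ρ) w(t)³ and 0 < w(t) < ρ^L for all t ≥ 0. Define ψ(t) = ρ^{−1} w(t)^{1/L}, so ψ(t) ∈ (0,1). Then for all t ≥ 0: log ψ(t) − log(1 − ψ(t)) + ∑_{n=1}^{2L−1} ψ(t)^{n−2L}/(n − 2L) = (λ/L) ρ^{2L−1} t + C, where C is the value of the left-hand side at t = 0. -/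
/-!
In the variable `ψ = ρ⁻¹ w^{1/L}` the dynamics become the autonomous equation
`ψ' = c ψ^{2L} (1 - ψ)` with `c = (λ/L) ρ^{2L-1}`. By partial fractions,
`1 / (x^m (1 - x)) = 1/(1 - x) + ∑_{j=1}^{m} x^{-j}`, so the left-hand side of the theorem is
`G(ψ)` for an antiderivative `G` of `1 / (x^{2L} (1 - x))` on `(0, 1)`, and `G(ψ(t))` grows with
constant speed `c`.
-/

open Set Filter Finset

/-- An antiderivative of `1 / (x ^ m * (1 - x))` on `(0, 1)`. -/
noncomputable def jepaPotential (m : ℕ) (x : ℝ) : ℝ :=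
  Real.log x - Real.log (1 - x)
    + ∑ n ∈ Finset.Icc 1 (m - 1), x ^ ((n : ℝ) - m) / ((n : ℝ) - m)

lemma sum_Icc_rpow_sub_sub_one {m : ℕ} (hm : 1 ≤ m) {x : ℝ} (hx : 0 < x) (hx1 : x ≠ 1) :
    ∑ n ∈ Finset.Icc 1 (m - 1), x ^ ((n : ℝ) - m - 1) = (x - x ^ m) / (x ^ (m + 1) * (1 - x)) := by
  have hIcc : Finset.Icc 1 (m - 1) = Finset.Ico 1 m := by
    ext n
    simp only [Finset.mem_Icc, Finset.mem_Ico]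
    omega
  have hterm : ∀ n ∈ Finset.Ico 1 m, x ^ ((n : ℝ) - m - 1) = x ^ n / x ^ (m + 1) := fun n _ => by
    rw [show (n : ℝ) - m - 1 = n - ((m + 1 : ℕ) : ℝ) by push_cast; ring,
      Real.rpow_sub hx, Real.rpow_natCast, Real.rpow_natCast]
  have h1x : 1 - x ≠ 0 := sub_ne_zero.mpr hx1.symm
  rw [hIcc, sum_congr rfl hterm, ← sum_div, geom_sum_Ico hx1 hm]
  field_simp
  ring

lemma hasDerivAt_jepaPotential {m : ℕ} (hm : 1 ≤ m) {x : ℝ} (hx : x ∈ Ioo (0 : ℝ) 1) :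
    HasDerivAt (jepaPotential m) (x ^ m * (1 - x))⁻¹ x := by
  obtain ⟨hx0, hx1⟩ := hx
  have h1x : 1 - x ≠ 0 := by linarith
  have hlog := Real.hasDerivAt_log hx0.ne'
  have hlog1 := ((hasDerivAt_id' x).const_sub 1).log h1x
  have hsum : HasDerivAt (fun y => ∑ n ∈ Finset.Icc 1 (m - 1), y ^ ((n : ℝ) - m) / ((n : ℝ) - m))
      (∑ n ∈ Finset.Icc 1 (m - 1), x ^ ((n : ℝ) - m - 1)) x := by
    refine HasDerivAt.fun_sum fun n hn => ?_
    have hnm : (n : ℝ) - m ≠ 0 := by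
      have : n < m := by have := (mem_Icc.mp hn).2; omega
      exact sub_ne_zero.mpr (by exact_mod_cast this.ne)
    refine ((Real.hasDerivAt_rpow_const (Or.inl hx0.ne')).div_const ((n : ℝ) - m)).congr_deriv ?_
    field_simp
  refine ((hlog.sub hlog1).add hsum).congr_deriv ?_
  rw [sum_Icc_rpow_sub_sub_one hm hx0 hx1.ne]
  field_simp
  ring

noncomputable def jepaRescale (L : ℕ) (rho a : ℝ) : ℝ :=
  rho⁻¹ * a ^ ((1 : ℝ) / L)

lemma jepaRescale_mem_Ioo {L : ℕ} (hL : L ≠ 0) {rho a : ℝ} (hrho : 0 < rho)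
    (ha : a ∈ Ioo 0 (rho ^ L)) : jepaRescale L rho a ∈ Ioo (0 : ℝ) 1 := by
  obtain ⟨ha0, ha1⟩ := ha
  have hroot : (rho ^ L) ^ ((1 : ℝ) / L) = rho := by
    rw [← Real.rpow_natCast, ← Real.rpow_mul hrho.le, mul_one_div_cancel (by exact_mod_cast hL),
      Real.rpow_one]
  have hlt : a ^ ((1 : ℝ) / L) < rho := by
    rw [← hroot]
    exact Real.rpow_lt_rpow ha0.le ha1 (by positivity)
  constructor
  · exact mul_pos (inv_pos.mpr hrho) (Real.rpow_pos_of_pos ha0 _)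
  · rw [jepaRescale, inv_mul_lt_iff₀ hrho, mul_one]
    exact hlt

lemma HasDerivAt.jepaRescale {L : ℕ} (hL : L ≠ 0) {lam rho : ℝ} (hrho : rho ≠ 0)
    {w : ℝ → ℝ} {t : ℝ} (hw : 0 < w t)
    (hode : HasDerivAt w (lam * w t ^ ((3 : ℝ) - 1 / L) - (lam / rho) * w t ^ 3) t) :
    HasDerivAt (fun s => jepaRescale L rho (w s))
      (lam / L * rho ^ (2 * L - 1) * jepaRescale L rho (w t) ^ (2 * L)
        * (1 - jepaRescale L rho (w t))) t := by
  refine ((hode.rpow_const (Or.inl hw.ne')).const_mul rho⁻¹).congr_deriv ?_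
  set a := w t
  set u := a ^ ((1 : ℝ) / L) with hu
  have hu0 : 0 < u := Real.rpow_pos_of_pos hw _
  have h3 : a ^ ((3 : ℝ) - 1 / L) = a ^ 3 / u := by
    rw [Real.rpow_sub hw, ← hu, show (3 : ℝ) = ((3 : ℕ) : ℝ) by norm_num, Real.rpow_natCast]
  have h1 : a ^ ((1 : ℝ) / L - 1) = u / a := by
    rw [Real.rpow_sub hw, Real.rpow_one]
  have hu2L : u ^ (2 * L) = a ^ 2 := by
    rw [hu, ← Real.rpow_natCast, ← Real.rpow_mul hw.le,
      show (1 : ℝ) / L * ((2 * L : ℕ) : ℝ) = ((2 : ℕ) : ℝ) by push_cast; field_simp,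
      Real.rpow_natCast]
  have hrho2L : rho ^ (2 * L) = rho ^ (2 * L - 1) * rho := by
    rw [← pow_succ]
    congr 1
    omega
  rw [_root_.jepaRescale, ← hu, h3, h1, mul_pow, inv_pow, hu2L, hrho2L]
  field_simp

lemma eq_mul_sub_add_of_hasDerivAt_Ici {f : ℝ → ℝ} {c a : ℝ}
    (hf : ∀ t ∈ Ici a, HasDerivAt f c t) : ∀ t ∈ Ici a, f t = c * (t - a) + f a := by
  intro t ht
  have hline : ∀ s, HasDerivAt (fun s => c * (s - a) + f a) c s := fun s => by
    simpa using (((hasDerivAt_id s).sub_const a).const_mul c).add_const (f a)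
  refine eq_of_has_deriv_right_eq (fun s hs => (hf s hs.1).hasDerivWithinAt)
    (fun s _ => (hline s).hasDerivWithinAt)
    (fun s hs => (hf s hs.1).continuousAt.continuousWithinAt)
    (fun s _ => (hline s).continuousAt.continuousWithinAt) (by simp) t ⟨ht, le_rfl⟩

theorem jepa_implicit_solution_general (L : ℕ) (hL : 1 ≤ L) (lam rho : ℝ)
    (hrho : 0 < rho)
    (w : ℝ → ℝ)
    (hode : ∀ t ∈ Ici (0 : ℝ),
      HasDerivAt w (lam * w t ^ ((3 : ℝ) - 1 / L) - (lam / rho) * w t ^ 3) t)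
    (hrange : ∀ t ∈ Ici (0 : ℝ), w t ∈ Ioo 0 (rho ^ L))
    (ψ : ℝ → ℝ) (hψ : ∀ t, ψ t = rho⁻¹ * w t ^ ((1 : ℝ) / L)) :
    ∀ t ∈ Ici (0 : ℝ),
      ψ t ∈ Ioo (0 : ℝ) 1 ∧
      Real.log (ψ t) - Real.log (1 - ψ t)
          + ∑ n ∈ Finset.Icc 1 (2 * L - 1), ψ t ^ ((n : ℝ) - 2 * L) / ((n : ℝ) - 2 * L)
        = (lam / L) * rho ^ (2 * L - 1) * t
          + (Real.log (ψ 0) - Real.log (1 - ψ 0)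
              + ∑ n ∈ Finset.Icc 1 (2 * L - 1),
                  ψ 0 ^ ((n : ℝ) - 2 * L) / ((n : ℝ) - 2 * L)) := by
  have hL0 : L ≠ 0 := by omega
  obtain rfl : ψ = fun s => jepaRescale L rho (w s) := funext hψ
  have hψ_mem : ∀ t ∈ Ici (0 : ℝ), jepaRescale L rho (w t) ∈ Ioo (0 : ℝ) 1 :=
    fun t ht => jepaRescale_mem_Ioo hL0 hrho (hrange t ht)
  have hG : ∀ t ∈ Ici (0 : ℝ),
      HasDerivAt (fun s => jepaPotential (2 * L) (jepaRescale L rho (w s)))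
        (lam / L * rho ^ (2 * L - 1)) t := fun t ht => by
    obtain ⟨hψ0, hψ1⟩ := hψ_mem t ht
    have hne : jepaRescale L rho (w t) ^ (2 * L) * (1 - jepaRescale L rho (w t)) ≠ 0 :=
      mul_ne_zero (pow_ne_zero _ hψ0.ne') (sub_ne_zero.mpr hψ1.ne')
    refine ((hasDerivAt_jepaPotential (m := 2 * L) (by omega) ⟨hψ0, hψ1⟩).comp t
      ((hode t ht).jepaRescale hL0 hrho.ne' (hrange t ht).1)).congr_deriv ?_
    rw [mul_comm, mul_assoc _ (_ ^ (2 * L)), mul_inv_cancel_right₀ hne]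
  intro t ht
  refine ⟨hψ_mem t ht, ?_⟩
  simpa only [jepaPotential, Nat.cast_mul, Nat.cast_ofNat, sub_zero]
    using eq_mul_sub_add_of_hasDerivAt_Ici hG t ht

/-- **Closed-form implicit solution of the JEPA dynamics.**
Let `L ≥ 1`, `λ, ρ > 0` and let `w` solve `ẇ = λ w^{3-1/L} - (λ/ρ) w³` with
`0 < w t < ρ^L` for all `t ≥ 0`.  Set `ψ t = ρ⁻¹ (w t)^{1/L} ∈ (0,1)`.  Then for
all `t ≥ 0`,
`log ψ(t) - log (1 - ψ(t)) + ∑_{n=1}^{2L-1} ψ(t)^{n-2L}/(n-2L) = (λ/L) ρ^{2L-1} t + C`,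
where `C` is the value of the left-hand side at `t = 0`. -/
theorem jepa_implicit_solution (L : ℕ) (hL : 1 ≤ L) (lam rho : ℝ)
    (hlam : 0 < lam) (hrho : 0 < rho)
    (w : ℝ → ℝ)
    (hode : ∀ t ∈ Ici (0 : ℝ),
      HasDerivAt w (lam * w t ^ ((3 : ℝ) - 1 / L) - (lam / rho) * w t ^ 3) t)
    (hrange : ∀ t ∈ Ici (0 : ℝ), w t ∈ Ioo 0 (rho ^ L))
    (ψ : ℝ → ℝ) (hψ : ∀ t, ψ t = rho⁻¹ * w t ^ ((1 : ℝ) / L)) :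
    ∀ t ∈ Ici (0 : ℝ),
      ψ t ∈ Ioo (0 : ℝ) 1 ∧
      Real.log (ψ t) - Real.log (1 - ψ t)
          + ∑ n ∈ Finset.Icc 1 (2 * L - 1), ψ t ^ ((n : ℝ) - 2 * L) / ((n : ℝ) - 2 * L)
        = (lam / L) * rho ^ (2 * L - 1) * t
          + (Real.log (ψ 0) - Real.log (1 - ψ 0)
              + ∑ n ∈ Finset.Icc 1 (2 * L - 1),
                  ψ 0 ^ ((n : ℝ) - 2 * L) / ((n : ℝ) - 2 * L)) :=
  jepa_implicit_solution_general L hL lam rho hrho w hode hrange ψ hψ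
end

section
/- Let L ≥ 2 be an integer and λ, ρ > 0. Let w : [0, ∞) → ℝ be differentiable with ẇ(t) = λ w(t)^{2−1/L} − (λ/ρ) w(t)³ and 0 < w(t) < ρ^{L/(L+1)} for all t ≥ 0. Define ψ(t) = ρ^{(1−L)/(L+1)} w(t)^{(L−1)/L}, so ψ(t) ∈ (0,1), and define 𝓘(u) = ((L−1)/((L+1) u)) Φ(u^{(L+1)/(L−1)}, 1, (1−L)/(1+L)) for u ∈ (0,1), where Φ(z, 1, a) = ∑_{n=0}^∞ zⁿ/(a + n) (the Lerch transcendent at s = 1, convergent for |z| < 1). Then for all t ≥ 0: 𝓘(ψ(t)) − 𝓘(ψ(0)) = (λ (L−1)/L) ρ^{(L−1)/(L+1)} t. -/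
/-!
Write `p = (L+1)/(L-1)` and `K = λ(L-1)/L · ρ^{(L-1)/(L+1)}`. Since `ψ^p = w^{(L+1)/L}/ρ`, the
equation for `w` becomes the autonomous equation `ψ' = K ψ² (1 - ψ^p)`. On the other hand
`𝓘(u) = (pu)⁻¹ Φ(u^p, 1, -1/p)`, and the Lerch equation `z ∂Φ/∂z + aΦ = 1/(1-z)` gives
`𝓘'(u) = 1/(u² (1 - u^p))`. Hence `𝓘 ∘ ψ` has constant derivative `K`.
-/

open Set Filter

/-- The Lerch transcendent `Φ(z, 1, a) = ∑_{n=0}^∞ zⁿ/(a+n)` at `s = 1`. -/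
noncomputable def lerchPhiOne (z a : ℝ) : ℝ := ∑' n : ℕ, z ^ n / (a + n)

/-- `𝓘(u) = ((L-1)/((L+1)u)) Φ(u^{(L+1)/(L-1)}, 1, (1-L)/(1+L))`. -/
noncomputable def maeAntideriv (L : ℕ) (u : ℝ) : ℝ :=
  (((L : ℝ) - 1) / (((L : ℝ) + 1) * u)) *
    lerchPhiOne (u ^ (((L : ℝ) + 1) / ((L : ℝ) - 1))) ((1 - (L : ℝ)) / (1 + (L : ℝ)))

section Lerch

variable {a z : ℝ}

lemma abs_natCast_div_add_le (ha : a ∈ Ioo (-1) 0) (n : ℕ) :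
    |(n : ℝ) / (a + n)| ≤ (1 + a)⁻¹ := by
  obtain ⟨ha₁, ha₀⟩ := ha
  rcases n.eq_zero_or_pos with rfl | hn
  · simp only [Nat.cast_zero, zero_div, abs_zero]
    exact (inv_pos.2 (by linarith)).le
  · have hn' : (1 : ℝ) ≤ n := by exact_mod_cast hn
    rw [abs_of_nonneg (div_nonneg (by positivity) (by linarith)),
      div_le_iff₀ (by linarith), inv_mul_eq_div, le_div_iff₀ (by linarith)]
    nlinarith

lemma add_natCast_ne_zero (ha : a ∈ Ioo (-1) 0) (n : ℕ) : a + n ≠ 0 := by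
  obtain ⟨ha₁, ha₀⟩ := ha
  rcases n.eq_zero_or_pos with rfl | hn
  · simpa using ha₀.ne
  · have hn' : (1 : ℝ) ≤ n := by exact_mod_cast hn
    linarith

/-- Termwise differentiation gives the Lerch equation `z ∂Φ/∂z + a Φ = ∑ zⁿ = 1/(1-z)`. -/
theorem hasDerivAt_lerchPhiOne (ha : a ∈ Ioo (-1) 0) (hz : |z| < 1) (hz₀ : z ≠ 0) :
    HasDerivAt (lerchPhiOne · a) (((1 - z)⁻¹ - a * lerchPhiOne z a) / z) z := by
  obtain ⟨r, hzr, hr₁⟩ := exists_between hz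
  have h0r : (0 : ℝ) ∈ Ioo (-r) r := ⟨by linarith [abs_nonneg z], by linarith [abs_nonneg z]⟩
  replace hzr : z ∈ Ioo (-r) r := abs_lt.1 hzr
  have hr₀ : 0 < r := by linarith [h0r.2]
  have hderiv : ∀ (n : ℕ) y, y ∈ Ioo (-r) r →
      HasDerivAt (fun y : ℝ => y ^ n / (a + n)) (n * y ^ (n - 1) / (a + n)) y :=
    fun n y _ => (hasDerivAt_pow n y).div_const _
  have hbound : ∀ (n : ℕ) y, y ∈ Ioo (-r) r →
      ‖(n : ℝ) * y ^ (n - 1) / (a + n)‖ ≤ (1 + a)⁻¹ * r ^ (n - 1) := by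
    intro n y hy
    rw [mul_div_right_comm, norm_mul, Real.norm_eq_abs, norm_pow, Real.norm_eq_abs]
    exact mul_le_mul (abs_natCast_div_add_le ha n)
      (pow_le_pow_left₀ (abs_nonneg y) (abs_lt.2 hy).le _) (by positivity)
      (inv_pos.2 (by linarith [ha.1])).le
  have hsummable_bound : Summable fun n : ℕ => (1 + a)⁻¹ * r ^ (n - 1) := by
    refine (summable_nat_add_iff 1).1 ?_
    simpa using (summable_geometric_of_lt_one (by positivity) hr₁).mul_left (1 + a)⁻¹
  have hsummable_zero : Summable fun n : ℕ => (0 : ℝ) ^ n / (a + n) :=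
    summable_of_ne_finset_zero (s := {0}) fun n hn => by
      simp [zero_pow (Finset.notMem_singleton.1 hn)]
  have hsummable : Summable fun n : ℕ => z ^ n / (a + n) :=
    summable_of_summable_hasDerivAt_of_isPreconnected hsummable_bound isOpen_Ioo
      isPreconnected_Ioo hderiv hbound h0r hsummable_zero hzr
  have hsummable' : Summable fun n : ℕ => n * z ^ (n - 1) / (a + n) :=
    .of_norm_bounded hsummable_bound fun n => hbound n z hzr
  have hlerch : z * ∑' n : ℕ, n * z ^ (n - 1) / (a + n) + a * lerchPhiOne z a = (1 - z)⁻¹ := by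
    rw [lerchPhiOne, ← tsum_mul_left, ← tsum_mul_left,
      ← (hsummable'.mul_left z).tsum_add (hsummable.mul_left a),
      ← tsum_geometric_of_abs_lt_one hz]
    refine tsum_congr fun n => ?_
    have := add_natCast_ne_zero ha n
    rcases n with _ | n
    · field_simp; simp
    · field_simp; push_cast; ring
  refine (hasDerivAt_tsum_of_isPreconnected hsummable_bound isOpen_Ioo isPreconnected_Ioo
    hderiv hbound h0r hsummable_zero hzr).congr_deriv ?_
  rw [eq_div_iff hz₀, ← hlerch]
  ring

end Lerch

theorem hasDerivAt_inv_mul_lerchPhiOne_rpow {p u : ℝ} (hp : 1 < p) (hu : u ∈ Ioo 0 1) :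
    HasDerivAt (fun u => (p * u)⁻¹ * lerchPhiOne (u ^ p) (-p⁻¹)) ((u ^ 2 * (1 - u ^ p))⁻¹) u := by
  obtain ⟨hu₀, hu₁⟩ := hu
  have hp₀ : 0 < p := by linarith
  have hup₀ : 0 < u ^ p := Real.rpow_pos_of_pos hu₀ p
  have hup₁ : u ^ p < 1 := Real.rpow_lt_one hu₀.le hu₁ hp₀
  have ha : -p⁻¹ ∈ Ioo (-1) 0 := ⟨neg_lt_neg (inv_lt_one_of_one_lt₀ hp), by simp [hp₀]⟩
  have hΦ := (hasDerivAt_lerchPhiOne ha (by rw [abs_of_pos hup₀]; exact hup₁) hup₀.ne').comp u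
    (Real.hasDerivAt_rpow_const (Or.inl hu₀.ne'))
  have hinv : HasDerivAt (fun u => (p * u)⁻¹) (-(p * 1) / (p * u) ^ 2) u :=
    ((hasDerivAt_id' u).const_mul p).inv (by positivity)
  refine (hinv.mul hΦ).congr_deriv ?_
  simp only [Function.comp_apply]
  have h1 : (1 - u ^ p) ≠ 0 := (sub_pos.2 hup₁).ne'
  rw [Real.rpow_sub_one hu₀.ne']
  field_simp
  ring

theorem maeAntideriv_eq (L : ℕ) :
    maeAntideriv L = fun u => (((L : ℝ) + 1) / ((L : ℝ) - 1) * u)⁻¹ *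
      lerchPhiOne (u ^ (((L : ℝ) + 1) / ((L : ℝ) - 1))) (-(((L : ℝ) + 1) / ((L : ℝ) - 1))⁻¹) := by
  have hfactor : ∀ u : ℝ, ((L : ℝ) - 1) / (((L : ℝ) + 1) * u)
      = (((L : ℝ) + 1) / ((L : ℝ) - 1) * u)⁻¹ := by
    intro u; rw [mul_inv, inv_div, ← div_div, div_eq_mul_inv _ u]
  have hshift : (1 - (L : ℝ)) / (1 + L) = -(((L : ℝ) + 1) / ((L : ℝ) - 1))⁻¹ := by
    rw [inv_div]; ring
  funext u
  rw [maeAntideriv, hfactor, hshift]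

theorem hasDerivAt_maeAntideriv_comp {L : ℕ} (hL : 2 ≤ L) {ψ : ℝ → ℝ} {K t : ℝ}
    (hψt : ψ t ∈ Ioo 0 1)
    (hψ : HasDerivAt ψ (K * ψ t ^ 2 * (1 - ψ t ^ (((L : ℝ) + 1) / ((L : ℝ) - 1)))) t) :
    HasDerivAt (maeAntideriv L ∘ ψ) K t := by
  have hL' : (2 : ℝ) ≤ L := by exact_mod_cast hL
  have hp : 1 < ((L : ℝ) + 1) / ((L : ℝ) - 1) := by rw [lt_div_iff₀ (by linarith)]; linarith
  have hψ₀ := hψt.1.ne'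
  have hψ₁ : 1 - ψ t ^ (((L : ℝ) + 1) / ((L : ℝ) - 1)) ≠ 0 :=
    (sub_pos.2 (Real.rpow_lt_one hψt.1.le hψt.2 (by linarith))).ne'
  rw [maeAntideriv_eq]
  refine ((hasDerivAt_inv_mul_lerchPhiOne_rpow hp hψt).comp t hψ).congr_deriv ?_
  field_simp

noncomputable def maePsi (L : ℕ) (rho x : ℝ) : ℝ :=
  rho ^ ((1 - (L : ℝ)) / ((L : ℝ) + 1)) * x ^ (((L : ℝ) - 1) / L)

section MaePsi

variable {L : ℕ} {rho : ℝ}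

lemma rpow_one_sub_div_mul_rpow_sub_one_div (hrho : 0 < rho) (c d : ℝ) :
    rho ^ ((1 - c) / d) * rho ^ ((c - 1) / d) = 1 := by
  rw [← Real.rpow_add hrho, ← add_div, sub_add_sub_cancel', sub_self, zero_div, Real.rpow_zero]

theorem maePsi_rpow (hL : 2 ≤ L) (hrho : 0 < rho) {x : ℝ} (hx : 0 ≤ x) :
    maePsi L rho x ^ (((L : ℝ) + 1) / ((L : ℝ) - 1)) = x ^ (((L : ℝ) + 1) / L) / rho := by
  have hL' : (2 : ℝ) ≤ L := by exact_mod_cast hL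
  have h₁ : (L : ℝ) - 1 ≠ 0 := by linarith
  have h₂ : (L : ℝ) ≠ 0 := by linarith
  rw [maePsi, Real.mul_rpow (by positivity) (by positivity), ← Real.rpow_mul hrho.le,
    ← Real.rpow_mul hx, div_mul_div_comm, div_mul_div_comm,
    show (1 - (L : ℝ)) * (L + 1) / ((L + 1) * (L - 1)) = -1 by field_simp; ring,
    show ((L : ℝ) - 1) * (L + 1) / (L * (L - 1)) = (L + 1) / L by field_simp,
    Real.rpow_neg_one, inv_mul_eq_div]

theorem maePsi_mem_Ioo (hL : 2 ≤ L) (hrho : 0 < rho) {x : ℝ}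
    (hx : x ∈ Ioo 0 (rho ^ ((L : ℝ) / (L + 1)))) : maePsi L rho x ∈ Ioo 0 1 := by
  have hL' : (2 : ℝ) ≤ L := by exact_mod_cast hL
  obtain ⟨hx₀, hx₁⟩ := hx
  refine ⟨by unfold maePsi; positivity, ?_⟩
  have hlt : x ^ (((L : ℝ) - 1) / L) < rho ^ (((L : ℝ) - 1) / ((L : ℝ) + 1)) := by
    calc x ^ (((L : ℝ) - 1) / L) < (rho ^ ((L : ℝ) / (L + 1))) ^ (((L : ℝ) - 1) / L) :=
          Real.rpow_lt_rpow hx₀.le hx₁ (div_pos (by linarith) (by linarith))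
      _ = rho ^ (((L : ℝ) - 1) / ((L : ℝ) + 1)) := by
          rw [← Real.rpow_mul hrho.le]; congr 1; field_simp
  calc maePsi L rho x
      < rho ^ ((1 - (L : ℝ)) / ((L : ℝ) + 1)) * rho ^ (((L : ℝ) - 1) / ((L : ℝ) + 1)) :=
        mul_lt_mul_of_pos_left hlt (by positivity)
    _ = 1 := rpow_one_sub_div_mul_rpow_sub_one_div hrho _ _

theorem hasDerivAt_maePsi_comp (hL : 2 ≤ L) (hrho : 0 < rho) {lam t : ℝ} {w : ℝ → ℝ}
    (hw₀ : 0 < w t)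
    (hw : HasDerivAt w (lam * w t ^ ((2 : ℝ) - 1 / L) - (lam / rho) * w t ^ 3) t) :
    HasDerivAt (fun s => maePsi L rho (w s))
      ((lam * ((L : ℝ) - 1) / L) * rho ^ (((L : ℝ) - 1) / ((L : ℝ) + 1)) *
        maePsi L rho (w t) ^ 2 * (1 - maePsi L rho (w t) ^ (((L : ℝ) + 1) / ((L : ℝ) - 1)))) t := by
  have hL' : (2 : ℝ) ≤ L := by exact_mod_cast hL
  have h₂ : (L : ℝ) ≠ 0 := by linarith
  refine ((hw.rpow_const (Or.inl hw₀.ne')).const_mul _).congr_deriv ?_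
  set x := w t
  have e1 : x ^ (((L : ℝ) - 1) / L - 1) * x ^ ((2 : ℝ) - 1 / L)
      = x ^ (((L : ℝ) - 1) / L) * x ^ (((L : ℝ) - 1) / L) := by
    rw [← Real.rpow_add hw₀, ← Real.rpow_add hw₀]; congr 1; field_simp; ring
  have e2 : x ^ (((L : ℝ) - 1) / L - 1) * x ^ 3
      = x ^ (((L : ℝ) - 1) / L) * x ^ (((L : ℝ) - 1) / L) * x ^ (((L : ℝ) + 1) / L) := by
    rw [← Real.rpow_natCast, ← Real.rpow_add hw₀, ← Real.rpow_add hw₀, ← Real.rpow_add hw₀]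
    congr 1; field_simp; ring
  have e3 := rpow_one_sub_div_mul_rpow_sub_one_div hrho (L : ℝ) ((L : ℝ) + 1)
  rw [maePsi_rpow hL hrho hw₀.le, maePsi]
  linear_combination (rho ^ ((1 - (L : ℝ)) / ((L : ℝ) + 1)) * (((L : ℝ) - 1) / L) * lam) * e1
    - (rho ^ ((1 - (L : ℝ)) / ((L : ℝ) + 1)) * (((L : ℝ) - 1) / L) * lam / rho) * e2
    - (lam * (((L : ℝ) - 1) / L) * rho ^ ((1 - (L : ℝ)) / ((L : ℝ) + 1)) *
        (x ^ (((L : ℝ) - 1) / L)) ^ 2 * (1 - x ^ (((L : ℝ) + 1) / L) / rho)) * e3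

end MaePsi

theorem sub_eq_mul_sub_of_hasDerivAt {f : ℝ → ℝ} {K a t : ℝ}
    (hf : ∀ s ∈ Ici a, HasDerivAt f K s) (ht : a ≤ t) : f t - f a = K * (t - a) := by
  have hg : ∀ s ∈ Ici a, HasDerivAt (fun s => f s - s * K) 0 s := fun s hs =>
    sub_self K ▸ (hf s hs).sub (hasDerivAt_mul_const K)
  have := constant_of_has_deriv_right_zero
    (fun s hs => (hg s hs.1).continuousAt.continuousWithinAt)
    (fun s hs => (hg s hs.1).hasDerivWithinAt) t ⟨ht, le_rfl⟩
  linarith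

theorem mae_implicit_solution_general (L : ℕ) (hL : 2 ≤ L) (lam rho : ℝ)
    (hrho : 0 < rho)
    (w : ℝ → ℝ)
    (hode : ∀ t ∈ Ici (0 : ℝ),
      HasDerivAt w (lam * w t ^ ((2 : ℝ) - 1 / L) - (lam / rho) * w t ^ 3) t)
    (hrange : ∀ t ∈ Ici (0 : ℝ), w t ∈ Ioo 0 (rho ^ ((L : ℝ) / (L + 1))))
    (ψ : ℝ → ℝ)
    (hψ : ∀ t, ψ t = rho ^ ((1 - (L : ℝ)) / ((L : ℝ) + 1)) * w t ^ (((L : ℝ) - 1) / L)) :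
    ∀ t ∈ Ici (0 : ℝ),
      ψ t ∈ Ioo (0 : ℝ) 1 ∧
      maeAntideriv L (ψ t) - maeAntideriv L (ψ 0)
        = (lam * ((L : ℝ) - 1) / L) * rho ^ (((L : ℝ) - 1) / ((L : ℝ) + 1)) * t := by
  obtain rfl : ψ = fun s => maePsi L rho (w s) := funext hψ
  intro t ht
  have hψ_mem : ∀ s ∈ Ici (0 : ℝ), maePsi L rho (w s) ∈ Ioo 0 1 := fun s hs =>
    maePsi_mem_Ioo hL hrho (hrange s hs)
  refine ⟨hψ_mem t ht, ?_⟩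
  have hderiv : ∀ s ∈ Ici (0 : ℝ), HasDerivAt (maeAntideriv L ∘ fun s => maePsi L rho (w s))
      ((lam * ((L : ℝ) - 1) / L) * rho ^ (((L : ℝ) - 1) / ((L : ℝ) + 1))) s := fun s hs =>
    hasDerivAt_maeAntideriv_comp hL (hψ_mem s hs)
      (hasDerivAt_maePsi_comp hL hrho (hrange s hs).1 (hode s hs))
  simpa using sub_eq_mul_sub_of_hasDerivAt hderiv ht

/-- **Closed-form implicit solution of the MAE dynamics (`L ≥ 2`).**
Let `w` solve `ẇ = λ w^{2-1/L} - (λ/ρ) w³` with `0 < w t < ρ^{L/(L+1)}` for all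
`t ≥ 0`, and set `ψ t = ρ^{(1-L)/(L+1)} (w t)^{(L-1)/L} ∈ (0,1)`.  Then for all
`t ≥ 0`, `𝓘(ψ t) - 𝓘(ψ 0) = (λ(L-1)/L) ρ^{(L-1)/(L+1)} t`. -/
theorem mae_implicit_solution (L : ℕ) (hL : 2 ≤ L) (lam rho : ℝ)
    (hlam : 0 < lam) (hrho : 0 < rho)
    (w : ℝ → ℝ)
    (hode : ∀ t ∈ Ici (0 : ℝ),
      HasDerivAt w (lam * w t ^ ((2 : ℝ) - 1 / L) - (lam / rho) * w t ^ 3) t)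
    (hrange : ∀ t ∈ Ici (0 : ℝ), w t ∈ Ioo 0 (rho ^ ((L : ℝ) / (L + 1))))
    (ψ : ℝ → ℝ)
    (hψ : ∀ t, ψ t = rho ^ ((1 - (L : ℝ)) / ((L : ℝ) + 1)) * w t ^ (((L : ℝ) - 1) / L)) :
    ∀ t ∈ Ici (0 : ℝ),
      ψ t ∈ Ioo (0 : ℝ) 1 ∧
      maeAntideriv L (ψ t) - maeAntideriv L (ψ 0)
        = (lam * ((L : ℝ) - 1) / L) * rho ^ (((L : ℝ) - 1) / ((L : ℝ) + 1)) * t :=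
  mae_implicit_solution_general L hL lam rho hrho w hode hrange ψ hψ
end

section
/- Fix an integer L ≥ 2, reals λ, ρ > 0 and p ∈ (0,1). For each ε ∈ (0, p ρ^{L/(L+1)}), let w_ε : [0, ∞) → ℝ be the solution of the MAE dynamics ẇ(t) = λ w(t)^{2−1/L} − (λ/ρ) w(t)³ with w_ε(0) = ε, and let t*(ε) be the unique time with w_ε(t*(ε)) = p ρ^{L/(L+1)}. Then, as ε → 0⁺, t*(ε) − L/(λ (L−1) ε^{(L−1)/L}) = O(1). -/
open Set Filter

/-! The field factors as `λ w^{2-1/L} (1 - w^{1+1/L}/ρ)`. Let `T(u) = L / (λ (L-1) u^{(L-1)/L})`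
be the blow-up time from `u` of the undamped growth `ẇ = λ w^{2-1/L}`. Along a solution,
`d/dt T(w) = -(1 - w^{1+1/L}/ρ) ≥ -1`, so `t* ≥ T(ε) - T(P)` with `P = p ρ^{L/(L+1)}`.
Below `P` the damping factor stays above `1 - P^{1+1/L}/ρ > 0`, and the time it costs is
paid for by a corrector `c w^{2/L}` whose derivative along the flow is a multiple of
`w^{1+1/L} (1 - w^{1+1/L}/ρ)`; this gives `t* ≤ T(ε) - T(P) + c P^{2/L}`. So `t* - T(ε)` stays
bounded as `ε → 0⁺`. -/

theorem monotoneOn_Icc_of_hasDerivAt_nonneg {f f' : ℝ → ℝ} {a b : ℝ}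
    (hf : ∀ x ∈ Icc a b, HasDerivAt f (f' x) x) (hf' : ∀ x ∈ Ioo a b, 0 ≤ f' x) :
    MonotoneOn f (Icc a b) :=
  monotoneOn_of_hasDerivWithinAt_nonneg (convex_Icc a b)
    (fun x hx => (hf x hx).continuousAt.continuousWithinAt)
    (fun x hx => (hf x (interior_subset hx)).hasDerivWithinAt)
    (fun x hx => hf' x (by rwa [interior_Icc] at hx))

theorem antitoneOn_Icc_of_hasDerivAt_nonpos {f f' : ℝ → ℝ} {a b : ℝ}
    (hf : ∀ x ∈ Icc a b, HasDerivAt f (f' x) x) (hf' : ∀ x ∈ Ioo a b, f' x ≤ 0) :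
    AntitoneOn f (Icc a b) :=
  antitoneOn_of_hasDerivWithinAt_nonpos (convex_Icc a b)
    (fun x hx => (hf x hx).continuousAt.continuousWithinAt)
    (fun x hx => (hf x (interior_subset hx)).hasDerivWithinAt)
    (fun x hx => hf' x (by rwa [interior_Icc] at hx))

theorem le_of_eq_only_at_right {f : ℝ → ℝ} {a b c : ℝ} (hf : ContinuousOn f (Icc a b))
    (ha : f a ≤ c) (hc : ∀ s ∈ Icc a b, f s = c → s = b) : ∀ t ∈ Icc a b, f t ≤ c := by
  intro t ht
  by_contra! hlt
  obtain ⟨s, hs, hfs⟩ := intermediate_value_Icc ht.1 (hf.mono (Icc_subset_Icc_right ht.2))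
    ⟨ha, hlt.le⟩
  have hsb := hc s ⟨hs.1, hs.2.trans ht.2⟩ hfs
  have htb : t = b := le_antisymm ht.2 (hsb ▸ hs.2)
  rw [htb, ← hsb, hfs] at hlt
  exact hlt.false

theorem le_image_of_hasDerivAt_pos_of_eq {f f' : ℝ → ℝ} {a b c : ℝ}
    (hf : ∀ x ∈ Icc a b, HasDerivAt f (f' x) x) (ha : c ≤ f a)
    (hc : ∀ x ∈ Ico a b, f x = c → 0 < f' x) : ∀ x ∈ Icc a b, c ≤ f x := by
  intro x hx
  have := image_le_of_deriv_right_lt_deriv_boundary' (f := fun x => -f x) (f' := fun x => -f' x)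
    (B := fun _ => -c) (B' := fun _ => 0)
    (fun x hx => (hf x hx).continuousAt.neg.continuousWithinAt)
    (fun x hx => (hf x (Ico_subset_Icc_self hx)).neg.hasDerivWithinAt) (neg_le_neg ha)
    continuousOn_const (fun _ _ => hasDerivWithinAt_const _ _ _)
    (fun x hx hfx => neg_neg_iff_pos.mpr (hc x hx (neg_inj.mp hfx))) hx
  exact neg_le_neg_iff.mp this

noncomputable def maeField (L lam rho u : ℝ) : ℝ := lam * u ^ ((2 : ℝ) - 1 / L) - lam / rho * u ^ 3

-- `∫_u^∞ dv / (λ v^{2-1/L})`, the blow-up time of `ẇ = λ w^{2-1/L}` started at `u`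
noncomputable def blowupTime (L lam u : ℝ) : ℝ := L / (lam * (L - 1) * u ^ ((L - 1) / L))

section
variable {L lam rho u : ℝ}

theorem maeField_eq_mul (hu : 0 < u) :
    maeField L lam rho u = lam * u ^ ((2 : ℝ) - 1 / L) * (1 - u ^ (1 + 1 / L) / rho) := by
  have h3 : u ^ 3 = u ^ ((2 : ℝ) - 1 / L) * u ^ (1 + 1 / L) := by
    rw [← Real.rpow_add hu, ← Real.rpow_natCast]
    norm_num
  rw [maeField, h3]
  ring

theorem rpow_lt_of_lt_rpow_div_add_one (hL : 0 < L) (hrho : 0 < rho) (hu : 0 ≤ u)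
    (hlt : u < rho ^ (L / (L + 1))) : u ^ (1 + 1 / L) < rho := by
  have hexp : L / (L + 1) = (1 + 1 / L)⁻¹ := by field_simp
  rw [hexp] at hlt
  exact (Real.lt_rpow_inv_iff_of_pos hu hrho.le (by positivity)).mp hlt

theorem maeField_pos (hL : 0 < L) (hlam : 0 < lam) (hrho : 0 < rho) (hu : 0 < u)
    (hlt : u < rho ^ (L / (L + 1))) : 0 < maeField L lam rho u := by
  rw [maeField_eq_mul hu]
  have := rpow_lt_of_lt_rpow_div_add_one hL hrho hu.le hlt
  have : u ^ (1 + 1 / L) / rho < 1 := (div_lt_one hrho).mpr this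
  have : 0 < u ^ ((2 : ℝ) - 1 / L) := by positivity
  have : 0 < 1 - u ^ (1 + 1 / L) / rho := by linarith
  positivity

theorem hasDerivAt_blowupTime (hL : 1 < L) (hlam : lam ≠ 0) (hu : 0 < u) :
    HasDerivAt (blowupTime L lam) (-(lam * u ^ ((2 : ℝ) - 1 / L))⁻¹) u := by
  have hL0 : L ≠ 0 := by positivity
  have hL1 : L - 1 ≠ 0 := sub_ne_zero.mpr hL.ne'
  have h := (Real.hasDerivAt_rpow_const (p := -((L - 1) / L)) (Or.inl hu.ne')).const_mul
    (L / (lam * (L - 1)))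
  refine (h.congr_of_eventuallyEq ?_).congr_deriv ?_
  · filter_upwards [lt_mem_nhds hu] with v hv
    rw [blowupTime, Real.rpow_neg hv.le]
    field_simp
  · rw [show -((L - 1) / L) - 1 = -((2 : ℝ) - 1 / L) by field_simp; ring, Real.rpow_neg hu.le]
    field_simp

theorem hasDerivAt_blowupTime_comp (hL : 1 < L) (hlam : lam ≠ 0) {w : ℝ → ℝ} {t : ℝ}
    (hw : HasDerivAt w (maeField L lam rho (w t)) t) (hwt : 0 < w t) :
    HasDerivAt (fun s => blowupTime L lam (w s)) (-(1 - w t ^ (1 + 1 / L) / rho)) t := by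
  refine ((hasDerivAt_blowupTime hL hlam hwt).comp t hw).congr_deriv ?_
  rw [maeField_eq_mul hwt]
  field_simp

theorem hasDerivAt_rpow_two_div_comp {w : ℝ → ℝ} {t : ℝ}
    (hw : HasDerivAt w (maeField L lam rho (w t)) t) (hwt : 0 < w t) :
    HasDerivAt (fun s => w s ^ (2 / L))
      (2 * lam / L * w t ^ (1 + 1 / L) * (1 - w t ^ (1 + 1 / L) / rho)) t := by
  refine (hw.rpow_const (Or.inl hwt.ne')).congr_deriv ?_
  rw [maeField_eq_mul hwt, show 1 + 1 / L = (2 / L - 1) + (2 - 1 / L) by ring,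
    Real.rpow_add hwt]
  ring

variable {w : ℝ → ℝ} {a b : ℝ}

theorem blowupTime_sub_blowupTime_le (hL : 1 < L) (hlam : lam ≠ 0) (hrho : 0 < rho)
    (hab : a ≤ b) (hw : ∀ t ∈ Icc a b, HasDerivAt w (maeField L lam rho (w t)) t)
    (hpos : ∀ t ∈ Icc a b, 0 < w t) :
    blowupTime L lam (w a) - blowupTime L lam (w b) ≤ b - a := by
  have hanti : AntitoneOn (fun s => -blowupTime L lam (w s) - s) (Icc a b) := by
    refine antitoneOn_Icc_of_hasDerivAt_nonpos
      (fun t ht => ((hasDerivAt_blowupTime_comp hL hlam (hw t ht) (hpos t ht)).neg).sub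
        (hasDerivAt_id t)) fun t ht => ?_
    have := hpos t (Ioo_subset_Icc_self ht)
    have : 0 ≤ w t ^ (1 + 1 / L) / rho := by positivity
    linarith
  linarith [hanti (left_mem_Icc.mpr hab) (right_mem_Icc.mpr hab) hab]

theorem sub_le_blowupTime_sub_blowupTime_add (hL : 1 < L) (hlam : 0 < lam) (hrho : 0 < rho)
    {P : ℝ} (hP : P ^ (1 + 1 / L) < rho) (hab : a ≤ b)
    (hw : ∀ t ∈ Icc a b, HasDerivAt w (maeField L lam rho (w t)) t)
    (hpos : ∀ t ∈ Icc a b, 0 < w t) (hle : ∀ t ∈ Icc a b, w t ≤ P) :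
    b - a ≤ blowupTime L lam (w a) - blowupTime L lam (w b)
      + L / (2 * lam * (rho - P ^ (1 + 1 / L))) * (w b ^ (2 / L) - w a ^ (2 / L)) := by
  set Q := P ^ (1 + 1 / L)
  set c := L / (2 * lam * (rho - Q))
  have hmono : MonotoneOn (fun s => -blowupTime L lam (w s) + c * w s ^ (2 / L) - s)
      (Icc a b) := by
    refine monotoneOn_Icc_of_hasDerivAt_nonneg
      (fun t ht => (((hasDerivAt_blowupTime_comp hL hlam.ne' (hw t ht) (hpos t ht)).neg).add
        ((hasDerivAt_rpow_two_div_comp (hw t ht) (hpos t ht)).const_mul c)).sub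
        (hasDerivAt_id t)) fun t ht => ?_
    have hwt := hpos t (Ioo_subset_Icc_self ht)
    set y := w t ^ (1 + 1 / L)
    have hy : y ≤ Q :=
      Real.rpow_le_rpow hwt.le (hle t (Ioo_subset_Icc_self ht)) (by positivity)
    have hL0 : L ≠ 0 := by positivity
    have hgap : 0 < rho - Q := sub_pos.mpr hP
    have key : -(-(1 - y / rho)) + c * (2 * lam / L * y * (1 - y / rho)) - 1
        = y * (Q - y) / (rho * (rho - Q)) := by
      simp only [c]
      field_simp
      ring
    rw [key]
    have : 0 ≤ y := by positivity
    exact div_nonneg (mul_nonneg this (by linarith)) (by positivity)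
  have := hmono (left_mem_Icc.mpr hab) (right_mem_Icc.mpr hab) hab
  simp only at this
  linarith

theorem abs_sub_blowupTime_le (hL : 1 < L) (hlam : 0 < lam) (hrho : 0 < rho) {ε P T : ℝ}
    (hP : P ^ (1 + 1 / L) < rho) (hT : 0 ≤ T)
    (hw : ∀ t ∈ Icc 0 T, HasDerivAt w (maeField L lam rho (w t)) t)
    (hpos : ∀ t ∈ Icc 0 T, 0 < w t) (hle : ∀ t ∈ Icc 0 T, w t ≤ P)
    (hw0 : w 0 = ε) (hwT : w T = P) :
    |T - blowupTime L lam ε|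
      ≤ blowupTime L lam P + L / (2 * lam * (rho - P ^ (1 + 1 / L))) * P ^ (2 / L) := by
  have hlow := blowupTime_sub_blowupTime_le hL hlam.ne' hrho hT hw hpos
  have hup := sub_le_blowupTime_sub_blowupTime_add hL hlam hrho hP hT hw hpos hle
  rw [hw0, hwT, sub_zero] at hlow hup
  have hε : 0 < ε := hw0 ▸ hpos 0 (left_mem_Icc.mpr hT)
  have hP0 : 0 < P := hwT ▸ hpos T (right_mem_Icc.mpr hT)
  have : 0 ≤ blowupTime L lam P :=
    div_nonneg (by positivity) (by have := sub_pos.mpr hL; positivity)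
  have : 0 ≤ L / (2 * lam * (rho - P ^ (1 + 1 / L))) * ε ^ (2 / L) :=
    mul_nonneg (div_nonneg (by positivity) (mul_nonneg (by positivity) (sub_pos.mpr hP).le))
      (by positivity)
  rw [abs_le]
  constructor <;> linarith

end

/-- **MAE critical time (`L ≥ 2`).**
Fix `L ≥ 2`, `λ, ρ > 0`, `p ∈ (0,1)`.  For each `ε ∈ (0, p ρ^{L/(L+1)})` let
`w ε` be the solution of the MAE dynamics `ẇ = λ w^{2-1/L} - (λ/ρ) w³` with
`w ε 0 = ε`, and let `tstar ε ≥ 0` be the unique time with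
`w ε (tstar ε) = p ρ^{L/(L+1)}`.  Then, as `ε → 0⁺`,
`tstar ε - L/(λ (L-1) ε^{(L-1)/L}) = O(1)`. -/
theorem mae_critical_time (L : ℕ) (hL : 2 ≤ L) (lam rho p : ℝ)
    (hlam : 0 < lam) (hrho : 0 < rho) (hp : p ∈ Ioo (0 : ℝ) 1)
    (w : ℝ → ℝ → ℝ) (tstar : ℝ → ℝ)
    (hinit : ∀ eps ∈ Ioo (0 : ℝ) (p * rho ^ ((L : ℝ) / (L + 1))), w eps 0 = eps)
    (hode : ∀ eps ∈ Ioo (0 : ℝ) (p * rho ^ ((L : ℝ) / (L + 1))), ∀ t ∈ Ici (0 : ℝ),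
      HasDerivAt (w eps)
        (lam * w eps t ^ ((2 : ℝ) - 1 / L) - (lam / rho) * w eps t ^ 3) t)
    (htstar_nonneg : ∀ eps ∈ Ioo (0 : ℝ) (p * rho ^ ((L : ℝ) / (L + 1))), 0 ≤ tstar eps)
    (htstar : ∀ eps ∈ Ioo (0 : ℝ) (p * rho ^ ((L : ℝ) / (L + 1))),
      w eps (tstar eps) = p * rho ^ ((L : ℝ) / (L + 1)))
    (htstar_unique : ∀ eps ∈ Ioo (0 : ℝ) (p * rho ^ ((L : ℝ) / (L + 1))),
      ∀ s ∈ Ici (0 : ℝ), w eps s = p * rho ^ ((L : ℝ) / (L + 1)) → s = tstar eps) :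
    (fun eps : ℝ => tstar eps - (L : ℝ) / (lam * ((L : ℝ) - 1) * eps ^ (((L : ℝ) - 1) / L)))
      =O[nhdsWithin 0 (Ioi (0 : ℝ))] (fun _ => (1 : ℝ)) := by
  have hL1 : (1 : ℝ) < L := by exact_mod_cast hL
  set P := p * rho ^ ((L : ℝ) / (L + 1))
  have hP0 : 0 < P := mul_pos hp.1 (by positivity)
  have hPfix : P < rho ^ ((L : ℝ) / (L + 1)) := mul_lt_of_lt_one_left (by positivity) hp.2
  have hP : P ^ (1 + 1 / (L : ℝ)) < rho :=
    rpow_lt_of_lt_rpow_div_add_one (by positivity) hrho hP0.le hPfix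
  refine Asymptotics.IsBigO.of_bound (blowupTime L lam P
    + L / (2 * lam * (rho - P ^ (1 + 1 / (L : ℝ)))) * P ^ (2 / (L : ℝ))) ?_
  filter_upwards [Ioo_mem_nhdsGT hP0] with eps heps
  have hw : ∀ t ∈ Icc 0 (tstar eps), HasDerivAt (w eps) (maeField L lam rho (w eps t)) t :=
    fun t ht => hode eps heps t ht.1
  have hge : ∀ t ∈ Icc 0 (tstar eps), eps ≤ w eps t :=
    le_image_of_hasDerivAt_pos_of_eq hw (hinit eps heps).ge fun t _ hwt => by
      rw [hwt]; exact maeField_pos (by positivity) hlam hrho heps.1 (heps.2.trans hPfix)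
  have hle : ∀ t ∈ Icc 0 (tstar eps), w eps t ≤ P :=
    le_of_eq_only_at_right (fun t ht => (hw t ht).continuousAt.continuousWithinAt)
      ((hinit eps heps).trans_le heps.2.le) fun s hs => htstar_unique eps heps s hs.1
  rw [norm_one, mul_one, Real.norm_eq_abs]
  exact abs_sub_blowupTime_le hL1 hlam hrho hP (htstar_nonneg eps heps) hw
    (fun t ht => heps.1.trans_le (hge t ht)) hle (hinit eps heps) (htstar eps heps)
end

section
/- Fix an integer L ≥ 2, reals λ > 0, p ∈ (0,1), and 0 < ρ < ρ'; set Δ = 1/ρ − 1/ρ'. For ε > 0 small, let t*_jepa(ε, ρ) denote the unique time at which the solution of ẇ = λ w^{3−1/L} − (λ/ρ) w³ with w(0) = ε reaches p ρ^L, and let t*_mae(ε, ρ) denote the unique time at which the solution of ẇ = λ w^{2−1/L} − (λ/ρ) w³ with w(0) = ε reaches p ρ^{L/(L+1)} (and similarly with ρ replaced by ρ'). Then, as ε → 0⁺: t*_jepa(ε, ρ)/t*_jepa(ε, ρ') = 1 + ((2L−1)/(2L−2)) Δ ε^{1/L} + O(ε^{2/L}), whereas t*_mae(ε, ρ)/t*_mae(ε,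 ρ') = 1 + O(ε^{(L−1)/L}). -/
/-!
Separating variables, a critical time is `T(ε) = ∫_ε^M dx / v(x)` for the velocity field
`v(x) = λ x^a (1 - x^b / ρ)` (`a + b = 3`). Expanding `1 / (1 - x^b / ρ)` geometrically and
integrating term by term, the JEPA time (`b = 1/L`) is
`ε^{1/L-2} (A + (B/ρ) ε^{1/L}) + O(ε^{3/L-2})` with `A` independent of `ρ`, so the ratio of two
such times is `1 + (B/A) Δ ε^{1/L} + O(ε^{2/L})`. For MAE (`b = 1 + 1/L`) the first correction
term is already integrable at `0`, so the time is `A ε^{1/L-1} + O(1)` and the ratio is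
`1 + O(ε^{1-1/L})`.
-/

open Set Filter Topology Asymptotics Real

structure IsHittingTime (g w : ℝ → ℝ) (ε M T : ℝ) : Prop where
  init : w 0 = ε
  hasDerivAt : ∀ t ∈ Ici (0 : ℝ), HasDerivAt w (g (w t)) t
  nonneg : 0 ≤ T
  hit : w T = M
  unique : ∀ s ∈ Ici (0 : ℝ), w s = M → s = T

namespace IsHittingTime

variable {g w : ℝ → ℝ} {ε M T : ℝ}

lemma continuousOn (h : IsHittingTime g w ε M T) : ContinuousOn w (Icc 0 T) :=
  fun t ht => (h.hasDerivAt t ht.1).continuousAt.continuousWithinAt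

lemma mapsTo_Icc (h : IsHittingTime g w ε M T) (hεM : ε ≤ M) (hgε : 0 < g ε) :
    MapsTo w (Icc 0 T) (Icc ε M) := by
  intro t ht
  constructor
  · -- barrier: wherever `w = ε`, the solution is increasing
    simpa using image_le_of_deriv_right_lt_deriv_boundary (f := fun t => -w t)
      (B := fun _ => -ε) (B' := fun _ => 0) h.continuousOn.neg
      (fun t ht => (h.hasDerivAt t ht.1).neg.hasDerivWithinAt) (by simp [h.init])
      (fun _ => hasDerivAt_const _ _) (fun t _ hwt => by simpa [neg_inj.1 hwt] using hgε) ht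
  · by_contra! hMt
    obtain ⟨u, hu, hwu⟩ : M ∈ w '' Icc 0 t :=
      intermediate_value_Icc ht.1 (h.continuousOn.mono (Icc_subset_Icc le_rfl ht.2))
        ⟨h.init ▸ hεM, hMt.le⟩
    have htT : t = T := le_antisymm ht.2 (h.unique u hu.1 hwu ▸ hu.2)
    exact hMt.ne' (htT ▸ h.hit)

theorem eq_integral (h : IsHittingTime g w ε M T) (hεM : ε ≤ M)
    (hg : ∀ x ∈ Icc ε M, 0 < g x) : T = ∫ x in ε..M, (g x)⁻¹ := by
  have hT := h.nonneg
  have hmaps := h.mapsTo_Icc hεM (hg ε ⟨le_rfl, hεM⟩)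
  have hIoo : Ioo (min 0 T) (max 0 T) = Ioo 0 T := by rw [min_eq_left hT, max_eq_right hT]
  calc T = ∫ t in 0..T, (g (w t))⁻¹ * g (w t) := by
        rw [intervalIntegral.integral_congr (g := fun _ => 1) fun t ht =>
          inv_mul_cancel₀ (hg _ (hmaps (uIcc_of_le hT ▸ ht))).ne']
        simp
    _ = ∫ x in w 0..w T, (g x)⁻¹ := intervalIntegral.integral_comp_mul_deriv_of_deriv_nonneg
          (g := fun x => (g x)⁻¹)
          (uIcc_of_le hT ▸ h.continuousOn) (hIoo ▸ fun t ht => h.hasDerivAt t ht.1.le)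
          (hIoo ▸ fun t ht => (hg _ (hmaps (Ioo_subset_Icc_self ht))).le)
    _ = ∫ x in ε..M, (g x)⁻¹ := by rw [h.init, h.hit]

lemma eventuallyEq_integral {w : ℝ → ℝ → ℝ} {T : ℝ → ℝ}
    (hM : 0 < M) (hg : ∀ x ∈ Ioc 0 M, 0 < g x)
    (hw : ∀ ε ∈ Ioo 0 M, IsHittingTime g (w ε) ε M (T ε)) :
    T =ᶠ[𝓝[>] 0] fun ε => ∫ x in ε..M, (g x)⁻¹ := by
  filter_upwards [Ioo_mem_nhdsGT hM] with ε hε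
  exact (hw ε hε).eq_integral hε.2.le fun x hx => hg x ⟨hε.1.trans_le hx.1, hx.2⟩

end IsHittingTime

/-- The reciprocal of the velocity `C x^(3-b) - (C/r) x^3` is `recipField C (b-3) b r`; expanding
`1 / (1 - x^b / r)` peels off one power `x^a / C` at a time (`recipField_eq_add`). -/
noncomputable def recipField (C a b r x : ℝ) : ℝ := x ^ a / (C * (1 - x ^ b / r))

section recipField

variable {C a b r ε M x : ℝ}

lemma inv_velocity_eq_recipField (hx : 0 < x) :
    (C * x ^ (3 - b) - C / r * x ^ 3)⁻¹ = recipField C (b - 3) b r x := by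
  have hx3 : x ^ 3 = x ^ (3 - b) * x ^ b := by
    rw [← rpow_add hx, sub_add_cancel]; norm_cast
  rw [recipField, hx3, show b - 3 = -(3 - b) by ring, rpow_neg hx.le,
    div_eq_mul_inv (x ^ (3 - b))⁻¹, ← mul_inv_rev]
  congr 1
  ring

lemma one_sub_rpow_div_pos (hx : 0 < x) (hxr : x ^ b < r) : 0 < 1 - x ^ b / r := by
  rw [sub_pos, div_lt_one ((rpow_pos_of_pos hx b).trans hxr)]
  exact hxr

lemma recipField_pos (hC : 0 < C) (hx : 0 < x) (hxr : x ^ b < r) : 0 < recipField C a b r x :=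
  div_pos (rpow_pos_of_pos hx a) (mul_pos hC (one_sub_rpow_div_pos hx hxr))

lemma recipField_eq_add (hC : C ≠ 0) (hx : 0 < x) (hxr : x ^ b < r) :
    recipField C a b r x = C⁻¹ * x ^ a + recipField (C * r) (a + b) b r x := by
  have hr : 0 < r := (rpow_pos_of_pos hx b).trans hxr
  have : r - x ^ b ≠ 0 := (sub_pos.2 hxr).ne'
  unfold recipField
  rw [rpow_add hx]
  field_simp
  ring

lemma recipField_le (hC : 0 < C) (hb : 0 ≤ b) (hx : 0 < x) (hxM : x ≤ M) (hMr : M ^ b < r) :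
    recipField C a b r x ≤ (C * (1 - M ^ b / r))⁻¹ * x ^ a := by
  have hr : 0 < r := (rpow_pos_of_pos (hx.trans_le hxM) b).trans hMr
  have := one_sub_rpow_div_pos (hx.trans_le hxM) hMr
  have := rpow_pos_of_pos hx a
  rw [recipField, div_eq_inv_mul]
  gcongr

lemma continuousOn_recipField (hC : C ≠ 0) (hε : 0 < ε) (hb : 0 ≤ b) (hMr : M ^ b < r) :
    ContinuousOn (recipField C a b r) (Icc ε M) := by
  intro x hx
  have hx0 : 0 < x := hε.trans_le hx.1
  have hxr : x ^ b < r := (rpow_le_rpow hx0.le hx.2 hb).trans_lt hMr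
  refine ContinuousAt.continuousWithinAt ?_
  unfold recipField
  exact (continuousAt_rpow_const _ _ (Or.inl hx0.ne')).div
    (continuousAt_const.mul (continuousAt_const.sub
      ((continuousAt_rpow_const _ _ (Or.inl hx0.ne')).div_const r)))
    (mul_ne_zero hC (one_sub_rpow_div_pos hx0 hxr).ne')

lemma velocity_pos (hC : 0 < C) (hx : 0 < x) (hxr : x ^ b < r) :
    0 < C * x ^ (3 - b) - C / r * x ^ 3 := by
  rw [← inv_pos, inv_velocity_eq_recipField hx]
  exact recipField_pos hC hx hxr

end recipField

section rpow

variable {c M : ℝ}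

lemma one_isBigO_rpow (hc : c ≤ 0) : (fun _ => (1 : ℝ)) =O[𝓝[>] 0] fun ε : ℝ => ε ^ c := by
  refine IsBigO.of_bound 1 ?_
  filter_upwards [Ioo_mem_nhdsGT one_pos] with ε hε
  rw [norm_one, one_mul, norm_of_nonneg (rpow_nonneg hε.1.le _)]
  exact one_le_rpow_of_pos_of_le_one_of_nonpos hε.1 hε.2.le hc

lemma tendsto_rpow_nhdsGT_zero (hc : 0 < c) : Tendsto (fun ε : ℝ => ε ^ c) (𝓝[>] 0) (𝓝 0) := by
  simpa [zero_rpow hc.ne'] using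
    (continuousAt_rpow_const 0 c (Or.inr hc.le)).tendsto.mono_left nhdsWithin_le_nhds

lemma integral_rpow_add_isBigO_one (hc : c ≠ -1) (hM : 0 < M) :
    (fun ε => (∫ x in ε..M, x ^ c) + ε ^ (c + 1) / (c + 1)) =O[𝓝[>] 0] fun _ => (1 : ℝ) := by
  refine (isBigO_const_one ℝ (M ^ (c + 1) / (c + 1)) _).congr' ?_ EventuallyEq.rfl
  filter_upwards [self_mem_nhdsWithin] with ε (hε : 0 < ε)
  rw [integral_rpow (Or.inr ⟨hc, notMem_uIcc_of_lt hε hM⟩)]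
  ring

lemma isBigO_integral_rpow (hc : c < -1) (hM : 0 < M) :
    (fun ε => ∫ x in ε..M, x ^ c) =O[𝓝[>] 0] fun ε => ε ^ (c + 1) := by
  have hmain : (fun ε : ℝ => ε ^ (c + 1) / (c + 1)) =O[𝓝[>] 0] fun ε => ε ^ (c + 1) :=
    ((isBigO_refl _ _).const_mul_left (c + 1)⁻¹).congr_left fun ε => by ring
  simpa using ((integral_rpow_add_isBigO_one hc.ne hM).trans
    (one_isBigO_rpow (by linarith))).sub hmain

lemma isBigO_one_integral_rpow (hc : -1 < c) (hM : 0 < M) :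
    (fun ε => ∫ x in ε..M, x ^ c) =O[𝓝[>] 0] fun _ => (1 : ℝ) := by
  have hmain : (fun ε : ℝ => ε ^ (c + 1) / (c + 1)) =O[𝓝[>] 0] fun _ => (1 : ℝ) :=
    ((tendsto_rpow_nhdsGT_zero (by linarith)).div_const _).isBigO_one ℝ
  simpa using (integral_rpow_add_isBigO_one hc.ne' hM).sub hmain

lemma mul_rpow_inv_rpow_lt {p r κ : ℝ} (hp : p ∈ Ioo 0 1) (hr : 0 < r) (hκ : 0 < κ) :
    (p * r ^ κ⁻¹) ^ κ < r := by
  rw [mul_rpow hp.1.le (by positivity), ← rpow_mul hr.le, inv_mul_cancel₀ hκ.ne', rpow_one]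
  exact mul_lt_of_lt_one_left hr (rpow_lt_one hp.1.le hp.2 hκ)

end rpow

section integral

variable {C a b r ε M : ℝ}

lemma integral_recipField_eq_add (hC : 0 < C) (hε : 0 < ε) (hεM : ε ≤ M) (hb : 0 ≤ b)
    (hMr : M ^ b < r) :
    ∫ x in ε..M, recipField C a b r x
      = C⁻¹ * (∫ x in ε..M, x ^ a) + ∫ x in ε..M, recipField (C * r) (a + b) b r x := by
  have hr : 0 < r := (rpow_pos_of_pos (hε.trans_le hεM) b).trans hMr
  rw [← intervalIntegral.integral_const_mul, ← intervalIntegral.integral_add]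
  · refine intervalIntegral.integral_congr fun x hx => ?_
    rw [uIcc_of_le hεM] at hx
    have hx0 : 0 < x := hε.trans_le hx.1
    exact recipField_eq_add hC.ne' hx0 ((rpow_le_rpow hx0.le hx.2 hb).trans_lt hMr)
  · exact (intervalIntegral.intervalIntegrable_rpow
      (Or.inr (notMem_uIcc_of_lt hε (hε.trans_le hεM)))).const_mul _
  · exact (continuousOn_recipField (mul_pos hC hr).ne' hε hb hMr).intervalIntegrable_of_Icc hεM

lemma isBigO_integral_recipField (hC : 0 < C) (hb : 0 ≤ b) (hM : 0 < M) (hMr : M ^ b < r) :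
    (fun ε => ∫ x in ε..M, recipField C a b r x) =O[𝓝[>] 0] fun ε => ∫ x in ε..M, x ^ a := by
  refine IsBigO.of_bound (C * (1 - M ^ b / r))⁻¹ ?_
  filter_upwards [Ioo_mem_nhdsGT hM] with ε hε
  have hpow : IntervalIntegrable (fun x => x ^ a) MeasureTheory.volume ε M :=
    intervalIntegral.intervalIntegrable_rpow (Or.inr (notMem_uIcc_of_lt hε.1 hM))
  have hle : ∀ x ∈ Icc ε M, recipField C a b r x ≤ (C * (1 - M ^ b / r))⁻¹ * x ^ a :=
    fun x hx => recipField_le hC hb (hε.1.trans_le hx.1) hx.2 hMr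
  have hpos : ∀ x ∈ Icc ε M, 0 ≤ recipField C a b r x := fun x hx =>
    have hx0 : 0 < x := hε.1.trans_le hx.1
    (recipField_pos hC hx0 ((rpow_le_rpow hx0.le hx.2 hb).trans_lt hMr)).le
  have hint := intervalIntegral.integral_mono_on hε.2.le
    ((continuousOn_recipField hC.ne' hε.1 hb hMr).intervalIntegrable_of_Icc hε.2.le)
    (hpow.const_mul _) hle
  rw [intervalIntegral.integral_const_mul] at hint
  rw [norm_of_nonneg (intervalIntegral.integral_nonneg hε.2.le hpos), norm_eq_abs]
  have := one_sub_rpow_div_pos hM hMr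
  exact hint.trans (by gcongr; exact le_abs_self _)

end integral

section expansion

variable {lam r α M : ℝ}

theorem jepa_integral_expansion (hlam : 0 < lam) (hα : 0 < α) (hα' : α < 2 / 3) (hM : 0 < M)
    (hMr : M ^ α < r) :
    (fun ε => (∫ x in ε..M, (lam * x ^ (3 - α) - lam / r * x ^ 3)⁻¹)
        - ε ^ (α - 2) * ((lam * (2 - α))⁻¹ + (lam * r * (2 - 2 * α))⁻¹ * ε ^ α))
      =O[𝓝[>] 0] fun ε => ε ^ (α - 2) * ε ^ (2 * α) := by
  have hr : 0 < r := (rpow_pos_of_pos hM α).trans hMr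
  have h₁ := integral_rpow_add_isBigO_one (c := α - 3) (by linarith) hM
  have h₂ := integral_rpow_add_isBigO_one (c := α - 3 + α) (by linarith) hM
  have h₃ := (isBigO_integral_recipField (a := α - 3 + α + α) (mul_pos (mul_pos hlam hr) hr)
    hα.le hM hMr).trans (isBigO_integral_rpow (by linarith) hM)
  refine (((h₁.const_mul_left lam⁻¹).add (h₂.const_mul_left (lam * r)⁻¹)).trans
    (one_isBigO_rpow (by linarith)) |>.add h₃).congr' ?_ ?_
  · filter_upwards [Ioo_mem_nhdsGT hM] with ε hε
    rw [intervalIntegral.integral_congr (g := recipField lam (α - 3) α r) fun x hx =>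
        inv_velocity_eq_recipField (hε.1.trans_le (uIcc_of_le hε.2.le ▸ hx).1),
      integral_recipField_eq_add hlam hε.1 hε.2.le hα.le hMr,
      integral_recipField_eq_add (mul_pos hlam hr) hε.1 hε.2.le hα.le hMr,
      show α - 3 + 1 = α - 2 by ring, show α - 3 + α + 1 = α - 2 + α by ring, rpow_add hε.1]
    have : α - 2 ≠ 0 := by linarith
    have : α - 2 + α ≠ 0 := by linarith
    have : 2 - α ≠ 0 := by linarith
    have : 1 - α ≠ 0 := by linarith
    field_simp
    ring
  · filter_upwards [self_mem_nhdsWithin] with ε (hε : 0 < ε)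
    rw [← rpow_add hε]
    ring_nf

theorem mae_integral_expansion (hlam : 0 < lam) (hα : 0 < α) (hα' : α < 1) (hM : 0 < M)
    (hMr : M ^ (1 + α) < r) :
    (fun ε => (∫ x in ε..M, (lam * x ^ (2 - α) - lam / r * x ^ 3)⁻¹)
        - (lam * (1 - α))⁻¹ * ε ^ (α - 1))
      =O[𝓝[>] 0] fun _ => (1 : ℝ) := by
  have hr : 0 < r := (rpow_pos_of_pos hM _).trans hMr
  have h₁ := integral_rpow_add_isBigO_one (c := 1 + α - 3) (by linarith) hM
  have h₂ := (isBigO_integral_recipField (a := 1 + α - 3 + (1 + α)) (mul_pos hlam hr)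
    (by linarith) hM hMr).trans (isBigO_one_integral_rpow (by linarith) hM)
  refine ((h₁.const_mul_left lam⁻¹).add h₂).congr' ?_ EventuallyEq.rfl
  filter_upwards [Ioo_mem_nhdsGT hM] with ε hε
  rw [show 2 - α = 3 - (1 + α) by ring,
    intervalIntegral.integral_congr (g := recipField lam (1 + α - 3) (1 + α) r) fun x hx =>
      inv_velocity_eq_recipField (hε.1.trans_le (uIcc_of_le hε.2.le ▸ hx).1),
    integral_recipField_eq_add hlam hε.1 hε.2.le (by linarith) hMr,
    show 1 + α - 3 + 1 = α - 1 by ring]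
  have : α - 1 ≠ 0 := by linarith
  have : 1 - α ≠ 0 := by linarith
  field_simp
  ring

end expansion

section ratio

variable {ι : Type*} {l : Filter ι} {T T₁ T₂ N x s g : ι → ℝ} {A B B₁ B₂ : ℝ}

lemma isEquivalent_of_expansion (hA : A ≠ 0) (hs : Tendsto s l (𝓝 0)) (hg : Tendsto g l (𝓝 0))
    (hT : (fun i => T i - x i * (A + B * s i)) =O[l] fun i => x i * g i) :
    T ~[l] fun i => A * x i := by
  have hsmall : ∀ {f : ι → ℝ}, Tendsto f l (𝓝 0) → (fun i => x i * f i) =o[l] x := fun hf => by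
    simpa using (isBigO_refl x l).mul_isLittleO ((isLittleO_one_iff ℝ).2 hf)
  refine IsLittleO.isEquivalent (IsLittleO.const_mul_right hA ?_)
  refine ((hT.trans_isLittleO (hsmall hg)).add ((hsmall hs).const_mul_left B)).congr_left
    fun i => ?_
  simp only [Pi.sub_apply]
  ring

lemma div_isBigO_of_isEquivalent (hA : A ≠ 0) (hx : ∀ᶠ i in l, x i ≠ 0)
    (hT : T ~[l] fun i => A * x i) (hN : N =O[l] fun i => x i * g i) :
    (fun i => N i / T i) =O[l] g := by
  have hinv : (fun i => (T i)⁻¹) =O[l] fun i => (A * x i)⁻¹ := hT.inv.isBigO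
  refine ((hN.mul hinv).trans (IsBigO.of_bound |A⁻¹| ?_)).congr_left
    fun i => (div_eq_mul_inv _ _).symm
  filter_upwards [hx] with i hi
  rw [show x i * g i * (A * x i)⁻¹ = A⁻¹ * g i by field_simp, norm_mul, norm_eq_abs]

theorem div_sub_isBigO_of_expansion (hA : A ≠ 0) (hx : ∀ᶠ i in l, x i ≠ 0)
    (hs : Tendsto s l (𝓝 0)) (hg : Tendsto g l (𝓝 0)) (hsg : (fun i => s i ^ 2) =O[l] g)
    (h₁ : (fun i => T₁ i - x i * (A + B₁ * s i)) =O[l] fun i => x i * g i)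
    (h₂ : (fun i => T₂ i - x i * (A + B₂ * s i)) =O[l] fun i => x i * g i) :
    (fun i => T₁ i / T₂ i - (1 + (B₁ - B₂) / A * s i)) =O[l] g := by
  have hT₂ := isEquivalent_of_expansion hA hs hg h₂
  have hT₂ne : ∀ᶠ i in l, T₂ i ≠ 0 := by
    filter_upwards [hT₂.isBigO_symm.eq_zero_imp, hx] with i hi hxi h
    exact mul_ne_zero hA hxi (hi h)
  have hsE := ((hs.isBigO_one ℝ).mul h₂).congr_right fun i => one_mul _
  have hN : (fun i => T₁ i - T₂ i - (B₁ - B₂) / A * s i * T₂ i) =O[l] fun i => x i * g i := by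
    refine (((h₁.sub h₂).sub (hsE.const_mul_left ((B₁ - B₂) / A))).sub
      (((isBigO_refl x l).mul hsg).const_mul_left ((B₁ - B₂) / A * B₂))).congr_left fun i => ?_
    field_simp
    ring
  refine (div_isBigO_of_isEquivalent hA hx hT₂ hN).congr' ?_ EventuallyEq.rfl
  filter_upwards [hT₂ne] with i hi
  field_simp
  ring

theorem div_sub_one_isBigO_of_expansion (hA : A ≠ 0) (hx : Tendsto x l atTop)
    (h₁ : (fun i => T₁ i - A * x i) =O[l] fun _ => (1 : ℝ))
    (h₂ : (fun i => T₂ i - A * x i) =O[l] fun _ => (1 : ℝ)) :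
    (fun i => T₁ i / T₂ i - 1) =O[l] fun i => (x i)⁻¹ := by
  have hx0 : ∀ᶠ i in l, x i ≠ 0 := hx.eventually_ne_atTop 0
  have hone : (fun _ => (1 : ℝ)) =ᶠ[l] fun i => x i * (x i)⁻¹ :=
    hx0.mono fun i hi => (mul_inv_cancel₀ hi).symm
  simpa using div_sub_isBigO_of_expansion (s := fun _ => 0) (g := fun i => (x i)⁻¹)
    (B₁ := 0) (B₂ := 0) hA hx0 tendsto_const_nhds (tendsto_inv_atTop_zero.comp hx)
    (by simpa using isBigO_zero _ _)
    (h₁.congr' (Eventually.of_forall fun i => by ring) hone)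
    (h₂.congr' (Eventually.of_forall fun i => by ring) hone)

end ratio

section criticalTime

variable {lam r α M : ℝ} {w : ℝ → ℝ → ℝ} {T : ℝ → ℝ}

theorem jepa_criticalTime_expansion (hlam : 0 < lam) (hα : 0 < α) (hα' : α < 2 / 3)
    (hM : 0 < M) (hMr : M ^ α < r)
    (hw : ∀ ε ∈ Ioo 0 M,
      IsHittingTime (fun x => lam * x ^ (3 - α) - lam / r * x ^ 3) (w ε) ε M (T ε)) :
    (fun ε => T ε - ε ^ (α - 2) * ((lam * (2 - α))⁻¹ + (lam * r * (2 - 2 * α))⁻¹ * ε ^ α))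
      =O[𝓝[>] 0] fun ε => ε ^ (α - 2) * ε ^ (2 * α) := by
  refine (jepa_integral_expansion hlam hα hα' hM hMr).congr' ?_ EventuallyEq.rfl
  refine (IsHittingTime.eventuallyEq_integral hM (fun x hx => ?_) hw).mono
    fun ε h => by simp only [h]
  exact velocity_pos hlam hx.1 ((rpow_le_rpow hx.1.le hx.2 hα.le).trans_lt hMr)

theorem mae_criticalTime_expansion (hlam : 0 < lam) (hα : 0 < α) (hα' : α < 1)
    (hM : 0 < M) (hMr : M ^ (1 + α) < r)
    (hw : ∀ ε ∈ Ioo 0 M,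
      IsHittingTime (fun x => lam * x ^ (2 - α) - lam / r * x ^ 3) (w ε) ε M (T ε)) :
    (fun ε => T ε - (lam * (1 - α))⁻¹ * ε ^ (α - 1)) =O[𝓝[>] 0] fun _ => (1 : ℝ) := by
  refine (mae_integral_expansion hlam hα hα' hM hMr).congr' ?_ EventuallyEq.rfl
  refine (IsHittingTime.eventuallyEq_integral hM (fun x hx => ?_) hw).mono
    fun ε h => by simp only [h]
  rw [show (2 : ℝ) - α = 3 - (1 + α) by ring]
  exact velocity_pos hlam hx.1 ((rpow_le_rpow hx.1.le hx.2 (by linarith)).trans_lt hMr)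

theorem jepa_criticalTime_ratio {L : ℕ} {ρ₁ ρ₂ p : ℝ} {w₁ w₂ : ℝ → ℝ → ℝ} {T₁ T₂ : ℝ → ℝ}
    (hL : 2 ≤ L) (hlam : 0 < lam) (hp : p ∈ Ioo 0 1) (hρ₁ : 0 < ρ₁) (hρ₂ : 0 < ρ₂)
    (hw₁ : ∀ ε ∈ Ioo 0 (p * ρ₁ ^ L), IsHittingTime
      (fun x => lam * x ^ ((3 : ℝ) - 1 / L) - lam / ρ₁ * x ^ 3) (w₁ ε) ε (p * ρ₁ ^ L) (T₁ ε))
    (hw₂ : ∀ ε ∈ Ioo 0 (p * ρ₂ ^ L), IsHittingTime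
      (fun x => lam * x ^ ((3 : ℝ) - 1 / L) - lam / ρ₂ * x ^ 3) (w₂ ε) ε (p * ρ₂ ^ L) (T₂ ε)) :
    (fun ε => T₁ ε / T₂ ε
        - (1 + (2 * (L : ℝ) - 1) / (2 * L - 2) * (1 / ρ₁ - 1 / ρ₂) * ε ^ ((1 : ℝ) / L)))
      =O[𝓝[>] 0] fun ε => ε ^ ((2 : ℝ) / L) := by
  have hL' : (2 : ℝ) ≤ L := by exact_mod_cast hL
  have hα : (0 : ℝ) < 1 / L := by positivity
  have hα' : (1 : ℝ) / L < 2 / 3 := by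
    rw [div_lt_div_iff₀ (by positivity) (by norm_num)]; linarith
  have hfix : ∀ {ρ : ℝ}, 0 < ρ → (p * ρ ^ L) ^ ((1 : ℝ) / L) < ρ := fun hρ => by
    simpa using mul_rpow_inv_rpow_lt hp hρ hα
  have hcoef : (2 * (L : ℝ) - 1) / (2 * L - 2) * (1 / ρ₁ - 1 / ρ₂)
      = ((lam * ρ₁ * (2 - 2 * (1 / L)))⁻¹ - (lam * ρ₂ * (2 - 2 * (1 / L)))⁻¹)
        / (lam * (2 - 1 / L))⁻¹ := by
    have : (L : ℝ) - 1 ≠ 0 := by linarith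
    field_simp
  rw [hcoef, ← mul_one_div (2 : ℝ) (L : ℝ)]
  refine div_sub_isBigO_of_expansion (inv_pos.2 (mul_pos hlam (by linarith))).ne' ?_
    (tendsto_rpow_nhdsGT_zero hα) (tendsto_rpow_nhdsGT_zero (by positivity)) ?_
    (jepa_criticalTime_expansion hlam hα hα' (mul_pos hp.1 (pow_pos hρ₁ L)) (hfix hρ₁) hw₁)
    (jepa_criticalTime_expansion hlam hα hα' (mul_pos hp.1 (pow_pos hρ₂ L)) (hfix hρ₂) hw₂)
  · filter_upwards [self_mem_nhdsWithin] with ε hε using (rpow_pos_of_pos hε _).ne'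
  · refine (isBigO_refl _ _).congr' ?_ EventuallyEq.rfl
    filter_upwards [self_mem_nhdsWithin] with ε (hε : 0 < ε)
    rw [← rpow_natCast, ← rpow_mul hε.le]
    ring_nf

theorem mae_criticalTime_ratio {L : ℕ} {ρ₁ ρ₂ p : ℝ} {w₁ w₂ : ℝ → ℝ → ℝ} {T₁ T₂ : ℝ → ℝ}
    (hL : 2 ≤ L) (hlam : 0 < lam) (hp : p ∈ Ioo 0 1) (hρ₁ : 0 < ρ₁) (hρ₂ : 0 < ρ₂)
    (hw₁ : ∀ ε ∈ Ioo 0 (p * ρ₁ ^ ((L : ℝ) / (L + 1))),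
      IsHittingTime (fun x => lam * x ^ ((2 : ℝ) - 1 / L) - lam / ρ₁ * x ^ 3) (w₁ ε) ε
        (p * ρ₁ ^ ((L : ℝ) / (L + 1))) (T₁ ε))
    (hw₂ : ∀ ε ∈ Ioo 0 (p * ρ₂ ^ ((L : ℝ) / (L + 1))),
      IsHittingTime (fun x => lam * x ^ ((2 : ℝ) - 1 / L) - lam / ρ₂ * x ^ 3) (w₂ ε) ε
        (p * ρ₂ ^ ((L : ℝ) / (L + 1))) (T₂ ε)) :
    (fun ε => T₁ ε / T₂ ε - 1) =O[𝓝[>] 0] fun ε => ε ^ (((L : ℝ) - 1) / L) := by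
  have hL' : (2 : ℝ) ≤ L := by exact_mod_cast hL
  have hα : (0 : ℝ) < 1 / L := by positivity
  have hα' : (1 : ℝ) / L < 1 := by rw [div_lt_one (by positivity)]; linarith
  have hfix : ∀ {ρ : ℝ}, 0 < ρ → (p * ρ ^ ((L : ℝ) / (L + 1))) ^ (1 + (1 : ℝ) / L) < ρ :=
    fun hρ => by
      have := mul_rpow_inv_rpow_lt hp hρ (by positivity : (0 : ℝ) < 1 + 1 / L)
      rwa [show (1 + (1 : ℝ) / L)⁻¹ = L / (L + 1) by field_simp] at this
  refine (div_sub_one_isBigO_of_expansion (inv_pos.2 (mul_pos hlam (by linarith))).ne'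
    (tendsto_rpow_neg_nhdsGT_zero (by linarith))
    (mae_criticalTime_expansion hlam hα hα' (mul_pos hp.1 (rpow_pos_of_pos hρ₁ _)) (hfix hρ₁) hw₁)
    (mae_criticalTime_expansion hlam hα hα' (mul_pos hp.1 (rpow_pos_of_pos hρ₂ _)) (hfix hρ₂) hw₂)
    ).congr' EventuallyEq.rfl ?_
  filter_upwards [self_mem_nhdsWithin] with ε (hε : 0 < ε)
  rw [← rpow_neg hε.le]
  congr 1
  field_simp
  ring

end criticalTime

/-- **Critical-time ratios: the implicit bias of JEPA vs MAE.**
Fix `L ≥ 2`, `λ > 0`, `p ∈ (0,1)` and `0 < ρ < ρ'`; set `Δ = 1/ρ - 1/ρ'`.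
For `r ∈ {ρ, ρ'}` and small `ε > 0`, let `tj r ε` be the unique time at which
the solution of the JEPA dynamics `ẇ = λ w^{3-1/L} - (λ/r) w³` started at `ε`
reaches `p r^L`, and `tm r ε` the unique time at which the solution of the MAE
dynamics `ẇ = λ w^{2-1/L} - (λ/r) w³` started at `ε` reaches `p r^{L/(L+1)}`.
Then, as `ε → 0⁺`,
`tj ρ ε / tj ρ' ε = 1 + ((2L-1)/(2L-2)) Δ ε^{1/L} + O(ε^{2/L})` while
`tm ρ ε / tm ρ' ε = 1 + O(ε^{(L-1)/L})`. -/
theorem critical_time_ratio (L : ℕ) (hL : 2 ≤ L) (lam p rho rho' : ℝ)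
    (hlam : 0 < lam) (hp : p ∈ Ioo (0 : ℝ) 1) (hrho : 0 < rho) (hrho' : rho < rho')
    (wj wm : ℝ → ℝ → ℝ → ℝ) (tj tm : ℝ → ℝ → ℝ)
    -- JEPA solutions and critical times, for r ∈ {ρ, ρ'}
    (hjinit : ∀ r ∈ ({rho, rho'} : Set ℝ), ∀ eps ∈ Ioo (0 : ℝ) (p * r ^ L),
      wj r eps 0 = eps)
    (hjode : ∀ r ∈ ({rho, rho'} : Set ℝ), ∀ eps ∈ Ioo (0 : ℝ) (p * r ^ L),
      ∀ t ∈ Ici (0 : ℝ),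
        HasDerivAt (wj r eps)
          (lam * wj r eps t ^ ((3 : ℝ) - 1 / L) - (lam / r) * wj r eps t ^ 3) t)
    (hjstar_nonneg : ∀ r ∈ ({rho, rho'} : Set ℝ), ∀ eps ∈ Ioo (0 : ℝ) (p * r ^ L),
      0 ≤ tj r eps)
    (hjstar : ∀ r ∈ ({rho, rho'} : Set ℝ), ∀ eps ∈ Ioo (0 : ℝ) (p * r ^ L),
      wj r eps (tj r eps) = p * r ^ L)
    (hjstar_unique : ∀ r ∈ ({rho, rho'} : Set ℝ), ∀ eps ∈ Ioo (0 : ℝ) (p * r ^ L),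
      ∀ s ∈ Ici (0 : ℝ), wj r eps s = p * r ^ L → s = tj r eps)
    -- MAE solutions and critical times, for r ∈ {ρ, ρ'}
    (hminit : ∀ r ∈ ({rho, rho'} : Set ℝ),
      ∀ eps ∈ Ioo (0 : ℝ) (p * r ^ ((L : ℝ) / (L + 1))), wm r eps 0 = eps)
    (hmode : ∀ r ∈ ({rho, rho'} : Set ℝ),
      ∀ eps ∈ Ioo (0 : ℝ) (p * r ^ ((L : ℝ) / (L + 1))), ∀ t ∈ Ici (0 : ℝ),
        HasDerivAt (wm r eps)
          (lam * wm r eps t ^ ((2 : ℝ) - 1 / L) - (lam / r) * wm r eps t ^ 3) t)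
    (hmstar_nonneg : ∀ r ∈ ({rho, rho'} : Set ℝ),
      ∀ eps ∈ Ioo (0 : ℝ) (p * r ^ ((L : ℝ) / (L + 1))), 0 ≤ tm r eps)
    (hmstar : ∀ r ∈ ({rho, rho'} : Set ℝ),
      ∀ eps ∈ Ioo (0 : ℝ) (p * r ^ ((L : ℝ) / (L + 1))),
        wm r eps (tm r eps) = p * r ^ ((L : ℝ) / (L + 1)))
    (hmstar_unique : ∀ r ∈ ({rho, rho'} : Set ℝ),
      ∀ eps ∈ Ioo (0 : ℝ) (p * r ^ ((L : ℝ) / (L + 1))),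
        ∀ s ∈ Ici (0 : ℝ), wm r eps s = p * r ^ ((L : ℝ) / (L + 1)) → s = tm r eps) :
    ((fun eps : ℝ => tj rho eps / tj rho' eps
        - (1 + ((2 * (L : ℝ) - 1) / (2 * (L : ℝ) - 2)) * (1 / rho - 1 / rho')
            * eps ^ ((1 : ℝ) / L)))
      =O[nhdsWithin 0 (Ioi (0 : ℝ))] (fun eps => eps ^ ((2 : ℝ) / L))) ∧
    ((fun eps : ℝ => tm rho eps / tm rho' eps - 1)
      =O[nhdsWithin 0 (Ioi (0 : ℝ))] (fun eps => eps ^ (((L : ℝ) - 1) / L))) := by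
  have hρ : rho ∈ ({rho, rho'} : Set ℝ) := by simp
  have hρ' : rho' ∈ ({rho, rho'} : Set ℝ) := by simp
  have hj : ∀ r ∈ ({rho, rho'} : Set ℝ), ∀ ε ∈ Ioo 0 (p * r ^ L), IsHittingTime
      (fun x => lam * x ^ ((3 : ℝ) - 1 / L) - lam / r * x ^ 3) (wj r ε) ε (p * r ^ L) (tj r ε) :=
    fun r hr ε hε => ⟨hjinit r hr ε hε, hjode r hr ε hε, hjstar_nonneg r hr ε hε,
      hjstar r hr ε hε, hjstar_unique r hr ε hε⟩
  have hm : ∀ r ∈ ({rho, rho'} : Set ℝ), ∀ ε ∈ Ioo 0 (p * r ^ ((L : ℝ) / (L + 1))),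
      IsHittingTime (fun x => lam * x ^ ((2 : ℝ) - 1 / L) - lam / r * x ^ 3) (wm r ε) ε
        (p * r ^ ((L : ℝ) / (L + 1))) (tm r ε) :=
    fun r hr ε hε => ⟨hminit r hr ε hε, hmode r hr ε hε, hmstar_nonneg r hr ε hε,
      hmstar r hr ε hε, hmstar_unique r hr ε hε⟩
  exact ⟨jepa_criticalTime_ratio hL hlam hp hrho (hrho.trans hrho') (hj rho hρ) (hj rho' hρ'),
    mae_criticalTime_ratio hL hlam hp hrho (hrho.trans hrho') (hm rho hρ) (hm rho' hρ')⟩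
end

section
/- Let L ≥ 2 be an integer and define, for u ∈ (0, 1), 𝓘(u) = ∑_{n=0}^∞ u^{n(L+1)/(L−1)−1}/(n(L+1)/(L−1) − 1). Then: (i) 𝓘(u) + 1/u = O(u^{2/(L−1)}) as u → 0⁺, and (ii) 𝓘(u) + ((L−1)/(L+1)) log(1 − u) = O(1) as u → 1⁻. -/
open Set Filter

/-- `𝓘(u) = ∑_{n=0}^∞ u^{n(L+1)/(L-1)-1}/(n(L+1)/(L-1)-1)`, the series
antiderivative of `u ↦ 1/(u² - u^{(3L-1)/(L-1)})` arising in the MAE dynamics. -/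
noncomputable def maeSeriesAntideriv (L : ℕ) (u : ℝ) : ℝ :=
  ∑' n : ℕ, u ^ ((n : ℝ) * ((L : ℝ) + 1) / ((L : ℝ) - 1) - 1)
    / ((n : ℝ) * ((L : ℝ) + 1) / ((L : ℝ) - 1) - 1)

namespace MAEAux

variable {a u : ℝ}

lemma den_pos (ha : 1 < a) (n : ℕ) : (0:ℝ) < a * ((n:ℝ)+1) - 1 := by
  have h : (0:ℝ) ≤ (n:ℝ) := Nat.cast_nonneg n
  nlinarith

lemma den_ge (ha : 1 < a) (n : ℕ) : a - 1 ≤ a * ((n:ℝ)+1) - 1 := by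
  have h : (0:ℝ) ≤ (n:ℝ) := Nat.cast_nonneg n
  nlinarith

lemma den_ge' (ha : 1 < a) (n : ℕ) : (a-1) * ((n:ℝ)+1) ≤ a * ((n:ℝ)+1) - 1 := by
  have h : (0:ℝ) ≤ (n:ℝ) := Nat.cast_nonneg n
  nlinarith

lemma pow_eq (hu : 0 < u) (a : ℝ) (n : ℕ) :
    u ^ (a * ((n:ℝ)+1) - 1) = u ^ (a-1) * (u ^ a) ^ n := by
  rw [← Real.rpow_natCast (u ^ a) n, ← Real.rpow_mul hu.le, ← Real.rpow_add hu]
  congr 1; ring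

lemma pow_eq' (hu : 0 < u) (a : ℝ) (n : ℕ) :
    u ^ (a * ((n:ℝ)+1) - 1) = (u ^ a) ^ (n+1) / u := by
  rw [← Real.rpow_natCast (u ^ a) (n+1), ← Real.rpow_mul hu.le, div_eq_mul_inv,
    ← Real.rpow_neg_one u, ← Real.rpow_add hu]
  congr 1; push_cast; ring

lemma term_le (ha : 1 < a) (hu0 : 0 < u) (n : ℕ) :
    u ^ (a * ((n:ℝ)+1) - 1) / (a * ((n:ℝ)+1) - 1)
      ≤ u ^ (a-1) / (a-1) * (u ^ a) ^ n := by
  have h1 := den_ge ha n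
  have h2 : (0:ℝ) < a - 1 := by linarith
  calc u ^ (a * ((n:ℝ)+1) - 1) / (a * ((n:ℝ)+1) - 1)
      = u ^ (a-1) * (u ^ a) ^ n / (a * ((n:ℝ)+1) - 1) := by rw [pow_eq hu0]
    _ ≤ u ^ (a-1) * (u ^ a) ^ n / (a-1) := by gcongr
    _ = u ^ (a-1) / (a-1) * (u ^ a) ^ n := by ring

lemma summable_shift (ha : 1 < a) (hu0 : 0 < u) (hu1 : u < 1) :
    Summable (fun n : ℕ => u ^ (a * ((n:ℝ)+1) - 1) / (a * ((n:ℝ)+1) - 1)) := by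
  have hr0 : (0:ℝ) ≤ u ^ a := (Real.rpow_pos_of_pos hu0 a).le
  have hr1 : u ^ a < 1 := Real.rpow_lt_one hu0.le hu1 (by linarith)
  refine Summable.of_nonneg_of_le (fun n => ?_) (fun n => term_le ha hu0 n)
    ((summable_geometric_of_lt_one hr0 hr1).mul_left _)
  exact div_nonneg (Real.rpow_nonneg hu0.le _) (den_pos ha n).le

lemma tsum_shift_nonneg (ha : 1 < a) (hu0 : 0 < u) :
    0 ≤ ∑' n : ℕ, u ^ (a * ((n:ℝ)+1) - 1) / (a * ((n:ℝ)+1) - 1) :=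
  tsum_nonneg fun n => div_nonneg (Real.rpow_nonneg hu0.le _) (den_pos ha n).le

lemma tsum_shift_le (ha : 1 < a) (hu0 : 0 < u) (hu1 : u < 1) :
    ∑' n : ℕ, u ^ (a * ((n:ℝ)+1) - 1) / (a * ((n:ℝ)+1) - 1)
      ≤ u ^ (a-1) / (a-1) * (1 - u ^ a)⁻¹ := by
  have hr0 : (0:ℝ) ≤ u ^ a := (Real.rpow_pos_of_pos hu0 a).le
  have hr1 : u ^ a < 1 := Real.rpow_lt_one hu0.le hu1 (by linarith)
  have h := Summable.tsum_le_tsum (fun n => term_le ha hu0 n) (summable_shift ha hu0 hu1)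
    ((summable_geometric_of_lt_one hr0 hr1).mul_left _)
  rwa [tsum_mul_left, tsum_geometric_of_lt_one hr0 hr1] at h

/-- splitting off the `n = 0` term -/
lemma key (ha : 1 < a) (hu0 : 0 < u) (hu1 : u < 1) :
    (∑' n : ℕ, u ^ (a * (n:ℝ) - 1) / (a * (n:ℝ) - 1))
      = -(1/u) + ∑' n : ℕ, u ^ (a * ((n:ℝ)+1) - 1) / (a * ((n:ℝ)+1) - 1) := by
  have hshift : Summable (fun n : ℕ =>
      u ^ (a * ((n+1:ℕ):ℝ) - 1) / (a * ((n+1:ℕ):ℝ) - 1)) := by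
    refine (summable_shift ha hu0 hu1).congr (fun n => ?_)
    push_cast; ring_nf
  have hsum : Summable (fun n : ℕ => u ^ (a * (n:ℝ) - 1) / (a * (n:ℝ) - 1)) :=
    (summable_nat_add_iff 1).1 hshift
  rw [Summable.tsum_eq_zero_add hsum]
  congr 1
  · simp [Real.rpow_neg_one, div_neg, one_div]
  · exact tsum_congr fun n => by push_cast; ring_nf

lemma base_summable : Summable (fun n : ℕ => 1/((n:ℝ)+1)^2) := by
  have h : Summable (fun n : ℕ => 1 / ((n:ℝ)) ^ 2) :=
    Real.summable_one_div_nat_pow.2 one_lt_two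
  refine ((summable_nat_add_iff 1).2 h).congr fun n => ?_
  push_cast; ring_nf

lemma qle (ha : 1 < a) (hu0 : 0 < u) (hu1 : u < 1) (n : ℕ) :
    u ^ (a * ((n:ℝ)+1) - 1) / ((a * ((n:ℝ)+1)) * (a * ((n:ℝ)+1) - 1))
      ≤ 1/(a*(a-1)) * (1/((n:ℝ)+1)^2) := by
  have hn : (0:ℝ) ≤ (n:ℝ) := Nat.cast_nonneg n
  have h1 : u ^ (a * ((n:ℝ)+1) - 1) ≤ 1 :=
    Real.rpow_le_one hu0.le hu1.le (by nlinarith)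
  have h4 : (0:ℝ) ≤ a*((n:ℝ)+1) := by positivity
  have h2 : a*(a-1)*((n:ℝ)+1)^2 ≤ (a * ((n:ℝ)+1)) * (a * ((n:ℝ)+1) - 1) := by
    nlinarith [mul_le_mul_of_nonneg_left (den_ge' ha n) h4]
  have h3 : (0:ℝ) < a*(a-1)*((n:ℝ)+1)^2 :=
    mul_pos (mul_pos (by linarith) (by linarith)) (by positivity)
  calc u ^ (a * ((n:ℝ)+1) - 1) / ((a * ((n:ℝ)+1)) * (a * ((n:ℝ)+1) - 1))
      ≤ 1 / (a*(a-1)*((n:ℝ)+1)^2) := div_le_div₀ (by norm_num) h1 h3 h2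
    _ = 1/(a*(a-1)) * (1/((n:ℝ)+1)^2) := by
        rw [one_div, one_div, one_div, mul_inv]

lemma q_summable (ha : 1 < a) (hu0 : 0 < u) (hu1 : u < 1) :
    Summable (fun n : ℕ =>
      u ^ (a * ((n:ℝ)+1) - 1) / ((a * ((n:ℝ)+1)) * (a * ((n:ℝ)+1) - 1))) := by
  refine Summable.of_nonneg_of_le (fun n => ?_) (qle ha hu0 hu1)
    (base_summable.mul_left _)
  exact div_nonneg (Real.rpow_nonneg hu0.le _)
    (mul_nonneg (by positivity) (den_pos ha n).le)

lemma Q_nonneg (ha : 1 < a) (hu0 : 0 < u) :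
    0 ≤ ∑' n : ℕ, u ^ (a * ((n:ℝ)+1) - 1) / ((a * ((n:ℝ)+1)) * (a * ((n:ℝ)+1) - 1)) :=
  tsum_nonneg fun n => div_nonneg (Real.rpow_nonneg hu0.le _)
    (mul_nonneg (by positivity) (den_pos ha n).le)

lemma Q_le (ha : 1 < a) (hu0 : 0 < u) (hu1 : u < 1) :
    (∑' n : ℕ, u ^ (a * ((n:ℝ)+1) - 1) / ((a * ((n:ℝ)+1)) * (a * ((n:ℝ)+1) - 1)))
      ≤ 1/(a*(a-1)) * ∑' n : ℕ, 1/((n:ℝ)+1)^2 := by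
  have h := Summable.tsum_le_tsum (qle ha hu0 hu1) (q_summable ha hu0 hu1)
    (base_summable.mul_left _)
  rwa [tsum_mul_left] at h

/-- decomposition `1/(m-1) = 1/m + 1/(m(m-1))` summed up. -/
lemma decomp (ha : 1 < a) (hu0 : 0 < u) (hu1 : u < 1) :
    (∑' n : ℕ, u ^ (a * ((n:ℝ)+1) - 1) / (a * ((n:ℝ)+1) - 1))
      = -Real.log (1 - u ^ a) / (a * u)
        + ∑' n : ℕ, u ^ (a * ((n:ℝ)+1) - 1) / ((a * ((n:ℝ)+1)) * (a * ((n:ℝ)+1) - 1)) := by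
  have ha0 : (0:ℝ) < a := by linarith
  have hr0 : (0:ℝ) ≤ u ^ a := (Real.rpow_pos_of_pos hu0 a).le
  have hr1 : u ^ a < 1 := Real.rpow_lt_one hu0.le hu1 (by linarith)
  have hlog := Real.hasSum_pow_div_log_of_abs_lt_one (x := u ^ a)
    (by rwa [abs_of_nonneg hr0])
  have hp : HasSum (fun n : ℕ => u ^ (a * ((n:ℝ)+1) - 1) / (a * ((n:ℝ)+1)))
      (-Real.log (1 - u ^ a) / (a * u)) := by
    have h := hlog.mul_left (1/(a*u))
    have he : ∀ n : ℕ, 1/(a*u) * ((u ^ a) ^ (n+1) / ((n:ℝ)+1))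
        = u ^ (a * ((n:ℝ)+1) - 1) / (a * ((n:ℝ)+1)) := by
      intro n
      rw [pow_eq' hu0]
      field_simp
    have h' : HasSum (fun n : ℕ => u ^ (a * ((n:ℝ)+1) - 1) / (a * ((n:ℝ)+1)))
        (1/(a*u) * -Real.log (1 - u ^ a)) := by
      refine h.congr_fun fun n => ?_
      rw [← he n]
    rw [show -Real.log (1 - u ^ a) / (a * u)
      = 1/(a*u) * -Real.log (1 - u ^ a) from by ring]
    exact h'
  have hterm : ∀ n : ℕ, u ^ (a * ((n:ℝ)+1) - 1) / (a * ((n:ℝ)+1) - 1)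
      = u ^ (a * ((n:ℝ)+1) - 1) / (a * ((n:ℝ)+1))
        + u ^ (a * ((n:ℝ)+1) - 1) / ((a * ((n:ℝ)+1)) * (a * ((n:ℝ)+1) - 1)) := by
    intro n
    have h1 := den_pos ha n
    have h2 : (0:ℝ) < a * ((n:ℝ)+1) := by positivity
    field_simp
    ring
  rw [tsum_congr hterm, Summable.tsum_add hp.summable (q_summable ha hu0 hu1), hp.tsum_eq]

end MAEAux

set_option maxHeartbeats 2000000 in
/-- **Asymptotics of the MAE antiderivative at its singular points (`L ≥ 2`).**
(i) `𝓘(u) + 1/u = O(u^{2/(L-1)})` as `u → 0⁺`, and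
(ii) `𝓘(u) + ((L-1)/(L+1)) log(1-u) = O(1)` as `u → 1⁻`. -/
theorem mae_antiderivative_asymptotics (L : ℕ) (hL : 2 ≤ L) :
    ((fun u : ℝ => maeSeriesAntideriv L u + 1 / u)
      =O[nhdsWithin 0 (Ioi (0 : ℝ))] (fun u => u ^ ((2 : ℝ) / ((L : ℝ) - 1)))) ∧
    ((fun u : ℝ => maeSeriesAntideriv L u + (((L : ℝ) - 1) / ((L : ℝ) + 1)) * Real.log (1 - u))
      =O[nhdsWithin 1 (Iio (1 : ℝ))] (fun _ => (1 : ℝ))) := by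
  have hL2 : (2:ℝ) ≤ (L:ℝ) := by exact_mod_cast hL
  have hL1 : (1:ℝ) ≤ (L:ℝ) - 1 := by linarith
  obtain ⟨a, ha_def⟩ : ∃ a : ℝ, a = ((L:ℝ)+1)/((L:ℝ)-1) := ⟨_, rfl⟩
  have ha : 1 < a := by
    rw [ha_def, lt_div_iff₀ (by linarith)]
    linarith
  have ha0 : (0:ℝ) < a := by linarith
  have hrw : ∀ u : ℝ, maeSeriesAntideriv L u
      = ∑' n : ℕ, u ^ (a*(n:ℝ)-1)/(a*(n:ℝ)-1) := by
    intro u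
    refine tsum_congr fun n => ?_
    have he : (n:ℝ)*((L:ℝ)+1)/((L:ℝ)-1) - 1 = a*(n:ℝ)-1 := by
      rw [ha_def]; ring
    rw [he]
  constructor
  · -- near 0
    have hexp : a - 1 = 2/((L:ℝ)-1) := by
      rw [ha_def]
      field_simp
      ring
    rw [Asymptotics.isBigO_iff]
    refine ⟨2/(a-1), ?_⟩
    filter_upwards [Ioo_mem_nhdsGT_of_mem
      (show (0:ℝ) ∈ Ico (0:ℝ) (1/2) by constructor <;> norm_num)] with u hu
    obtain ⟨hu0, hu2⟩ := hu
    have hu1 : u < 1 := by linarith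
    have hT0 := MAEAux.tsum_shift_nonneg ha hu0
    have hTle := MAEAux.tsum_shift_le ha hu0 hu1
    have hua : u ^ a ≤ u := by
      calc u ^ a ≤ u ^ (1:ℝ) := Real.rpow_le_rpow_of_exponent_ge hu0 hu1.le ha.le
        _ = u := Real.rpow_one u
    have hinv : (1 - u ^ a)⁻¹ ≤ 2 := by
      have h : (1:ℝ)/2 ≤ 1 - u ^ a := by linarith
      have h2 := inv_anti₀ (by norm_num : (0:ℝ) < 1/2) h
      simpa using h2
    have hval : maeSeriesAntideriv L u + 1/u
        = ∑' n : ℕ, u ^ (a*((n:ℝ)+1)-1)/(a*((n:ℝ)+1)-1) := by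
      rw [hrw u, MAEAux.key ha hu0 hu1]; ring
    rw [hval, Real.norm_eq_abs, Real.norm_eq_abs, abs_of_nonneg hT0,
        abs_of_pos (Real.rpow_pos_of_pos hu0 _)]
    calc (∑' n : ℕ, u ^ (a*((n:ℝ)+1)-1)/(a*((n:ℝ)+1)-1))
        ≤ u^(a-1)/(a-1)*(1-u^a)⁻¹ := hTle
      _ ≤ u^(a-1)/(a-1)*2 :=
          mul_le_mul_of_nonneg_left hinv
            (div_nonneg (Real.rpow_nonneg hu0.le _) (by linarith))
      _ = 2/(a-1) * u^(a-1) := by ring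
      _ = 2/(a-1) * u^((2:ℝ)/((L:ℝ)-1)) := by rw [hexp]
  · -- near 1
    have hco : (((L:ℝ)-1)/((L:ℝ)+1)) = 1/a := by rw [ha_def, one_div_div]
    rw [Asymptotics.isBigO_iff]
    refine ⟨1/(a*(a-1)) * (∑' n : ℕ, 1/((n:ℝ)+1)^2) + 2 + 2/a + 2*Real.log a/a, ?_⟩
    filter_upwards [Ioo_mem_nhdsLT_of_mem
      (show (1:ℝ) ∈ Ioc (1/2:ℝ) 1 by constructor <;> norm_num)] with u hu
    obtain ⟨hu2, hu1⟩ := hu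
    have hu0 : (0:ℝ) < u := by linarith
    have h1u : (0:ℝ) < 1 - u := by linarith
    have hua : u ^ a ≤ u := by
      calc u ^ a ≤ u ^ (1:ℝ) := Real.rpow_le_rpow_of_exponent_ge hu0 hu1.le ha.le
        _ = u := Real.rpow_one u
    have hualt : u ^ a < 1 := Real.rpow_lt_one hu0.le hu1 (by linarith)
    have h1ua : (0:ℝ) < 1 - u ^ a := by linarith
    set r : ℝ := (1 - u^a)/(1-u) with hrdef
    have hr1 : 1 ≤ r := (le_div_iff₀ h1u).2 (by linarith)
    have hra : r ≤ a := by
      rw [hrdef, div_le_iff₀ h1u]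
      have hb := one_add_mul_self_le_rpow_one_add (s := u - 1) (by linarith) ha.le
      have he : (1 + (u-1)) = u := by ring
      rw [he] at hb
      linarith
    have hr0 : (0:ℝ) < r := lt_of_lt_of_le one_pos hr1
    have hlogsplit : Real.log (1 - u^a) = Real.log (1-u) + Real.log r := by
      rw [← Real.log_mul (ne_of_gt h1u) (ne_of_gt hr0)]
      congr 1
      rw [hrdef]
      field_simp
    set Q : ℝ := ∑' n : ℕ, u ^ (a*((n:ℝ)+1)-1)/((a*((n:ℝ)+1))*(a*((n:ℝ)+1)-1)) with hQdef
    have hQ0 : 0 ≤ Q := MAEAux.Q_nonneg ha hu0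
    have hQle : Q ≤ 1/(a*(a-1)) * ∑' n : ℕ, 1/((n:ℝ)+1)^2 := MAEAux.Q_le ha hu0 hu1
    have hval : maeSeriesAntideriv L u + (((L:ℝ)-1)/((L:ℝ)+1)) * Real.log (1-u)
        = Q + (-(1/u)) + (1/a)*((1 - 1/u)*Real.log (1-u)) + (-(Real.log r/(a*u))) := by
      rw [hco, hrw u, MAEAux.key ha hu0 hu1, MAEAux.decomp ha hu0 hu1, hlogsplit]
      ring
    have h1abs : |(-(1/u))| ≤ 2 := by
      rw [abs_neg, abs_of_pos (by positivity), div_le_iff₀ hu0]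
      linarith
    have hQabs : |Q| ≤ 1/(a*(a-1)) * ∑' n : ℕ, 1/((n:ℝ)+1)^2 := by
      rwa [abs_of_nonneg hQ0]
    have hlogneg : Real.log (1-u) < 0 := Real.log_neg h1u (by linarith)
    have hAabs : |(1/a)*((1 - 1/u)*Real.log (1-u))| ≤ 2/a := by
      have hAeq : (1/a)*((1 - 1/u)*Real.log (1-u))
          = 1/(a*u) * ((1-u)*(-Real.log (1-u))) := by
        field_simp
        ring
      have hxlog : (1-u)*(-Real.log (1-u)) ≤ 1 := by
        have h := Real.log_le_sub_one_of_pos (x := (1-u)⁻¹) (by positivity)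
        rw [Real.log_inv] at h
        have hinv : (1-u)*(1-u)⁻¹ = 1 := mul_inv_cancel₀ (ne_of_gt h1u)
        nlinarith
      have hA0 : 0 ≤ 1/(a*u) * ((1-u)*(-Real.log (1-u))) :=
        mul_nonneg (by positivity) (mul_nonneg h1u.le (by linarith))
      rw [hAeq, abs_of_nonneg hA0]
      calc 1/(a*u) * ((1-u)*(-Real.log (1-u))) ≤ 1/(a*u) * 1 :=
            mul_le_mul_of_nonneg_left hxlog (by positivity)
        _ = 1/(a*u) := mul_one _
        _ ≤ 2/a := by
            rw [div_le_div_iff₀ (by positivity) ha0]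
            nlinarith
    have hBabs : |(-(Real.log r/(a*u)))| ≤ 2*Real.log a/a := by
      have hlr0 : 0 ≤ Real.log r := Real.log_nonneg hr1
      have hlra : Real.log r ≤ Real.log a := Real.log_le_log hr0 hra
      have hla0 : 0 ≤ Real.log a := Real.log_nonneg ha.le
      rw [abs_neg, abs_of_nonneg (div_nonneg hlr0 (by positivity))]
      calc Real.log r/(a*u) = Real.log r * (1/(a*u)) := by ring
        _ ≤ Real.log a * (2/a) := by
            apply mul_le_mul hlra ?_ (by positivity) hla0
            rw [div_le_div_iff₀ (by positivity) ha0]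
            nlinarith
        _ = 2*Real.log a/a := by ring
    rw [hval, Real.norm_eq_abs, norm_one, mul_one]
    calc |Q + (-(1/u)) + (1/a)*((1 - 1/u)*Real.log (1-u)) + (-(Real.log r/(a*u)))|
        ≤ |Q + (-(1/u)) + (1/a)*((1 - 1/u)*Real.log (1-u))| + |(-(Real.log r/(a*u)))| :=
          abs_add_le _ _
      _ ≤ (|Q + (-(1/u))| + |(1/a)*((1 - 1/u)*Real.log (1-u))|) + |(-(Real.log r/(a*u)))| := by
          gcongr
          exact abs_add_le _ _
      _ ≤ ((|Q| + |(-(1/u))|) + |(1/a)*((1 - 1/u)*Real.log (1-u))|) + |(-(Real.log r/(a*u)))| := by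
          gcongr
          exact abs_add_le _ _
      _ ≤ 1/(a*(a-1)) * (∑' n : ℕ, 1/((n:ℝ)+1)^2) + 2 + 2/a + 2*Real.log a/a := by
          linarith [hQabs, h1abs, hAabs, hBabs]
end

section
/- Let d, L ≥ 1 be integers, let Σ^{xx}, Σ^{yx} ∈ ℝ^{d×d} be diagonal with strictly positive diagonal entries, and let U ∈ ℝ^{d×d} be orthogonal. Let ω̄ : ℝ → ℝ^{d×d} be differentiable, with ω̄(t) diagonal with strictly positive diagonal entries for every t, satisfying ω̄'(t) = L(ω̄(t)^{3−1/L} Σ^{yx} − ω̄(t)³ Σ^{xx}), where fractional powers of the positive diagonal matrix ω̄(t) are taken entrywise on the diagonal. Define W̄(t) = U ω̄(t) and V(t) = U ω̄(t)^{1/L} Uᵀ. Then for all t: d/dt V(t) = W̄(t) Σ^{yx} W̄(t)ᵀ − V(t) W̄(t) Σ^{xx} W̄(t)ᵀ. -/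
/-!
Everything in the ansatz except `U` is diagonal, so those factors commute, and `Uᵀ U = 1`
collapses the decoder right-hand side to `U (ω̄ Σ^{yx} ω̄ - ω̄^{1/L} ω̄ Σ^{xx} ω̄) Uᵀ`. Its diagonal
entries `ω² s - ω^{1/L} ω² x` are exactly what the chain rule gives for `(ω^{1/L})'` when
`ω' = L (ω^{3-1/L} s - ω³ x)`.
-/

open Matrix

/-- Entrywise (diagonal) real power of a diagonal matrix with positive diagonal:
`(diagRpow A r) i i = (A i i) ^ r` and the off-diagonal entries vanish. -/
noncomputable def diagRpow {d : ℕ} (A : Matrix (Fin d) (Fin d) ℝ) (r : ℝ) :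
    Matrix (Fin d) (Fin d) ℝ :=
  Matrix.of fun i j => if i = j then A i i ^ r else 0

lemma diagRpow_eq_diagonal {d : ℕ} (A : Matrix (Fin d) (Fin d) ℝ) (r : ℝ) :
    diagRpow A r = diagonal fun i => A i i ^ r := by
  ext i j
  simp [diagRpow, diagonal_apply]

lemma hasDerivAt_mul_mul_apply {𝕜 m n p q : Type*} [NontriviallyNormedField 𝕜]
    [Fintype n] [Fintype p] (A : Matrix m n 𝕜) (B : Matrix p q 𝕜)
    {M : 𝕜 → Matrix n p 𝕜} {M' : Matrix n p 𝕜} {t : 𝕜}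
    (h : ∀ k l, HasDerivAt (fun s => M s k l) (M' k l) t) (i : m) (j : q) :
    HasDerivAt (fun s => (A * M s * B) i j) ((A * M' * B) i j) t := by
  simp only [mul_apply, Finset.sum_mul]
  exact HasDerivAt.fun_sum fun k _ => HasDerivAt.fun_sum fun l _ =>
    ((h l k).const_mul _).mul_const _

lemma hasDerivAt_diagRpow_apply {d : ℕ} {ω : ℝ → Matrix (Fin d) (Fin d) ℝ} {ω' : Fin d → ℝ}
    {t : ℝ} (h : ∀ k, HasDerivAt (fun s => ω s k k) (ω' k) t) (hpos : ∀ k, 0 < ω t k k)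
    (r : ℝ) (i j : Fin d) :
    HasDerivAt (fun s => diagRpow (ω s) r i j)
      (diagonal (fun k => ω' k * r * ω t k k ^ (r - 1)) i j) t := by
  simp only [diagRpow_eq_diagonal, diagonal_apply]
  split_ifs with hij
  · subst hij
    exact (h i).rpow_const (Or.inl (hpos i).ne')
  · exact hasDerivAt_const t 0

lemma conj_sub_conj_eq_conj_sub {R n : Type*} [CommRing R] [Fintype n] [DecidableEq n]
    {U W : Matrix n n R} (hU : Uᵀ * U = 1) (hW : Wᵀ = W) (D S X : Matrix n n R) :
    (U * W) * S * (U * W)ᵀ - (U * D * Uᵀ) * (U * W) * X * (U * W)ᵀ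
      = U * (W * S * W - D * W * X * W) * Uᵀ := by
  have hUDU : U * D * Uᵀ * (U * W) = U * D * W := by
    rw [Matrix.mul_assoc (U * D), ← Matrix.mul_assoc Uᵀ, hU, Matrix.one_mul]
  rw [hUDU, transpose_mul, hW]
  simp only [Matrix.mul_assoc, Matrix.mul_sub, Matrix.sub_mul]

lemma jepa_rpow_one_div_deriv_eq {L : ℝ} (hL : L ≠ 0) {ω : ℝ} (hω : 0 < ω) (s x : ℝ) :
    L * (ω ^ (3 - 1 / L) * s - ω ^ 3 * x) * (1 / L) * ω ^ (1 / L - 1)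
      = ω ^ 2 * s - ω ^ (1 / L) * ω ^ 2 * x := by
  have h₁ : ω ^ (3 - 1 / L) * ω ^ (1 / L - 1) = ω ^ 2 := by
    rw [← Real.rpow_add hω]
    norm_num
  have h₂ : ω ^ 3 * ω ^ (1 / L - 1) = ω ^ (1 / L) * ω ^ 2 := by
    rw [← Real.rpow_natCast ω 3, ← Real.rpow_add hω, ← Real.rpow_natCast ω 2,
      ← Real.rpow_add hω]
    norm_num
    ring_nf
  calc _ = ω ^ (3 - 1 / L) * ω ^ (1 / L - 1) * s - ω ^ 3 * ω ^ (1 / L - 1) * x := by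
        field_simp
    _ = _ := by rw [h₁, h₂]

theorem jepa_ansatz_decoder_general (d L : ℕ) (hL : 1 ≤ L)
    (Sxx Syx : Matrix (Fin d) (Fin d) ℝ)
    (hSxx_diag : Sxx.IsDiag) (hSyx_diag : Syx.IsDiag)
    (U : Matrix (Fin d) (Fin d) ℝ) (hU_orth : Uᵀ * U = 1)
    (ωbar : ℝ → Matrix (Fin d) (Fin d) ℝ)
    (hdiag : ∀ t, (ωbar t).IsDiag) (hpos : ∀ t i, 0 < ωbar t i i)
    (hode : ∀ (t : ℝ) (i j : Fin d),
      HasDerivAt (fun s => ωbar s i j)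
        ((L : ℝ) *
          ((diagRpow (ωbar t) ((3 : ℝ) - 1 / L) * Syx - ωbar t ^ 3 * Sxx) i j)) t) :
    ∀ (t : ℝ) (i j : Fin d),
      HasDerivAt (fun s => (U * diagRpow (ωbar s) ((1 : ℝ) / L) * Uᵀ) i j)
        (((U * ωbar t) * Syx * (U * ωbar t)ᵀ
          - (U * diagRpow (ωbar t) ((1 : ℝ) / L) * Uᵀ) * (U * ωbar t) * Sxx
            * (U * ωbar t)ᵀ) i j) t := by
  intro t i j
  have hL₀ : (L : ℝ) ≠ 0 := Nat.cast_ne_zero.mpr (by omega)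
  have hD := hasDerivAt_diagRpow_apply (fun k => hode t k k) (hpos t) (1 / L)
  have hV := hasDerivAt_mul_mul_apply U Uᵀ hD i j
  rw [conj_sub_conj_eq_conj_sub hU_orth (hdiag t).isSymm]
  refine hV.congr_deriv (congrArg (fun M : Matrix (Fin d) (Fin d) ℝ => (U * M * Uᵀ) i j) ?_)
  rw [← (hdiag t).diagonal_diag, ← hSyx_diag.diagonal_diag, ← hSxx_diag.diagonal_diag]
  simp only [diagRpow_eq_diagonal, diagonal_pow, diagonal_mul_diagonal, diagonal_sub, diag_apply,
    diagonal_apply_eq, Pi.pow_apply]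
  congr 1
  funext k
  rw [jepa_rpow_one_div_deriv_eq hL₀ (hpos t k)]
  ring

/-- **The diagonal ansatz solves the JEPA decoder equation.**
Let `Σ^{xx}, Σ^{yx}` be diagonal positive, `U` orthogonal, and let `ω̄(t)` be
diagonal with positive diagonal entries satisfying
`ω̄' = L (ω̄^{3-1/L} Σ^{yx} - ω̄³ Σ^{xx})` (fractional powers taken entrywise on
the diagonal).  Then `W̄(t) = U ω̄(t)` and `V(t) = U ω̄(t)^{1/L} Uᵀ` satisfy the
decoder gradient-flow equation
`d/dt V = W̄ Σ^{yx} W̄ᵀ - V W̄ Σ^{xx} W̄ᵀ`. -/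
theorem jepa_ansatz_decoder (d L : ℕ) (hd : 1 ≤ d) (hL : 1 ≤ L)
    (Sxx Syx : Matrix (Fin d) (Fin d) ℝ)
    (hSxx_diag : Sxx.IsDiag) (hSyx_diag : Syx.IsDiag)
    (hSxx_pos : ∀ i, 0 < Sxx i i) (hSyx_pos : ∀ i, 0 < Syx i i)
    (U : Matrix (Fin d) (Fin d) ℝ) (hU_orth : Uᵀ * U = 1)
    (ωbar : ℝ → Matrix (Fin d) (Fin d) ℝ)
    (hdiag : ∀ t, (ωbar t).IsDiag) (hpos : ∀ t i, 0 < ωbar t i i)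
    (hode : ∀ (t : ℝ) (i j : Fin d),
      HasDerivAt (fun s => ωbar s i j)
        ((L : ℝ) *
          ((diagRpow (ωbar t) ((3 : ℝ) - 1 / L) * Syx - ωbar t ^ 3 * Sxx) i j)) t) :
    ∀ (t : ℝ) (i j : Fin d),
      HasDerivAt (fun s => (U * diagRpow (ωbar s) ((1 : ℝ) / L) * Uᵀ) i j)
        (((U * ωbar t) * Syx * (U * ωbar t)ᵀ
          - (U * diagRpow (ωbar t) ((1 : ℝ) / L) * Uᵀ) * (U * ωbar t) * Sxx
            * (U * ωbar t)ᵀ) i j) t :=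
  jepa_ansatz_decoder_general d L hL Sxx Syx hSxx_diag hSyx_diag U hU_orth ωbar hdiag hpos hode
end

section
/- Let d, L ≥ 1 be integers, let Σ^{xx}, Σ^{yx} ∈ ℝ^{d×d} be diagonal with strictly positive diagonal entries, and let U ∈ ℝ^{d×d} be orthogonal. Let ω : ℝ → ℝ^{d×d} be differentiable, with ω(t) diagonal with strictly positive diagonal entries for every t, satisfying ω'(t) = ω(t)^L Σ^{yx} − ω(t)^{2L+1} Σ^{xx}. Define W̄(t) = U ω(t)^L and V(t) = ω(t) Uᵀ. Then for all t: d/dt V(t) = Σ^{yx} W̄(t)ᵀ − V(t) W̄(t) Σ^{xx} W̄(t)ᵀ; moreover, ω̄(t) := ω(t)^L satisfies ω̄'(t) = L(ω̄(t)^{2−1/L} Σ^{yx} − ω̄(t)³ Σ^{xx}). -/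
/-!
Diagonal matrices commute and are symmetric, so with `UᵀU = 1` the decoder right-hand side
collapses to `(ω^L Σ^{yx} - ω^{2L+1} Σ^{xx}) Uᵀ = ω' Uᵀ`. For `ω̄ = ω^L` the chain rule gives
`L ω^{L-1} ω'`, and on the positive diagonal `ω^{2L-1} = ω̄^{2-1/L}`.
-/

open Matrix

lemma diagRpow_diagonal {d : ℕ} (v : Fin d → ℝ) (r : ℝ) :
    diagRpow (diagonal v) r = diagonal fun i => v i ^ r := by
  ext i j
  by_cases h : i = j
  · subst h; simp [diagRpow]
  · simp [diagRpow, h]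

namespace Matrix

lemma IsDiag.commute {n R : Type*} [Fintype n] [DecidableEq n] [CommSemiring R]
    {A B : Matrix n n R} (hA : A.IsDiag) (hB : B.IsDiag) : Commute A B := by
  rw [← hA.diagonal_diag, ← hB.diagonal_diag]
  exact commute_diagonal _ _

lemma balanced_decoder_rhs {n R : Type*} [Fintype n] [DecidableEq n] [CommRing R]
    {ω Sxx Syx U : Matrix n n R} (hω : ωᵀ = ω) (hxx : Commute ω Sxx) (hyx : Commute ω Syx)
    (hU : Uᵀ * U = 1) (L : ℕ) :
    Syx * (U * ω ^ L)ᵀ - ω * Uᵀ * (U * ω ^ L) * Sxx * (U * ω ^ L)ᵀ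
      = (ω ^ L * Syx - ω ^ (2 * L + 1) * Sxx) * Uᵀ := by
  have hWt : (U * ω ^ L)ᵀ = ω ^ L * Uᵀ := by rw [transpose_mul, transpose_pow, hω]
  have hVW : ω * Uᵀ * (U * ω ^ L) = ω ^ (L + 1) := by
    rw [mul_assoc, ← mul_assoc Uᵀ, hU, one_mul, pow_succ']
  rw [hWt, hVW, sub_mul, ← mul_assoc, ← (hyx.pow_left L).eq, mul_assoc _ Sxx,
    ← mul_assoc Sxx, ← (hxx.pow_left L).eq, ← mul_assoc, ← mul_assoc, ← pow_add]
  ring_nf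

lemma hasDerivAt_mul_const_apply {m n p : Type*} [Fintype n] {A : ℝ → Matrix m n ℝ}
    {A' : Matrix m n ℝ} {t : ℝ} (hA : ∀ i k, HasDerivAt (fun s => A s i k) (A' i k) t)
    (B : Matrix n p ℝ) (i : m) (j : p) :
    HasDerivAt (fun s => (A s * B) i j) ((A' * B) i j) t := by
  simp only [mul_apply]
  exact HasDerivAt.fun_sum fun k _ => (hA i k).mul_const (B k j)

lemma hasDerivAt_diagonal_apply {n : Type*} [DecidableEq n] {f : ℝ → n → ℝ} {f' : n → ℝ}
    {t : ℝ} (hf : ∀ k, HasDerivAt (fun s => f s k) (f' k) t) (i j : n) :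
    HasDerivAt (fun s => diagonal (f s) i j) (diagonal f' i j) t := by
  by_cases h : i = j
  · subst h; simpa using hf i
  · simpa [h] using hasDerivAt_const t (0 : ℝ)

end Matrix

lemma pow_succ_rpow_two_sub_one_div {a : ℝ} (ha : 0 ≤ a) (m : ℕ) :
    (a ^ (m + 1)) ^ ((2 : ℝ) - 1 / ((m + 1 : ℕ) : ℝ)) = a ^ (2 * m + 1) := by
  rw [← Real.rpow_natCast a, ← Real.rpow_mul ha, ← Real.rpow_natCast a (2 * m + 1)]
  congr 1
  push_cast
  field_simp
  ring

lemma HasDerivAt.pow_of_balanced_flow {f : ℝ → ℝ} {t x y : ℝ} {L : ℕ} (hL : 1 ≤ L)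
    (hpos : 0 < f t) (hf : HasDerivAt f (f t ^ L * y - f t ^ (2 * L + 1) * x) t) :
    HasDerivAt (fun s => f s ^ L)
      (L * ((f t ^ L) ^ ((2 : ℝ) - 1 / L) * y - (f t ^ L) ^ 3 * x)) t := by
  obtain ⟨m, rfl⟩ : ∃ m, L = m + 1 := ⟨L - 1, by omega⟩
  refine (hf.pow (m + 1)).congr_deriv ?_
  rw [pow_succ_rpow_two_sub_one_div hpos.le]
  push_cast
  ring

theorem mae_ansatz_decoder_general (d L : ℕ) (hL : 1 ≤ L)
    (Sxx Syx : Matrix (Fin d) (Fin d) ℝ)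
    (hSxx_diag : Sxx.IsDiag) (hSyx_diag : Syx.IsDiag)
    (U : Matrix (Fin d) (Fin d) ℝ) (hU_orth : Uᵀ * U = 1)
    (ω : ℝ → Matrix (Fin d) (Fin d) ℝ)
    (hdiag : ∀ t, (ω t).IsDiag) (hpos : ∀ t i, 0 < ω t i i)
    (hode : ∀ (t : ℝ) (i j : Fin d),
      HasDerivAt (fun s => ω s i j)
        ((ω t ^ L * Syx - ω t ^ (2 * L + 1) * Sxx) i j) t) :
    (∀ (t : ℝ) (i j : Fin d),
      HasDerivAt (fun s => (ω s * Uᵀ) i j)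
        ((Syx * (U * ω t ^ L)ᵀ
          - (ω t * Uᵀ) * (U * ω t ^ L) * Sxx * (U * ω t ^ L)ᵀ) i j) t) ∧
    (∀ (t : ℝ) (i j : Fin d),
      HasDerivAt (fun s => (ω s ^ L) i j)
        ((L : ℝ) *
          ((diagRpow (ω t ^ L) ((2 : ℝ) - 1 / L) * Syx
            - (ω t ^ L) ^ 3 * Sxx) i j)) t) := by
  refine ⟨fun t i j => ?_, fun t i j => ?_⟩
  · rw [balanced_decoder_rhs (hdiag t).isSymm ((hdiag t).commute hSxx_diag)
      ((hdiag t).commute hSyx_diag) hU_orth]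
    exact hasDerivAt_mul_const_apply (hode t) Uᵀ i j
  · have hω : ∀ s, ω s = diagonal fun k => ω s k k := fun s => (hdiag s).diagonal_diag.symm
    have hSxx : Sxx = diagonal fun k => Sxx k k := hSxx_diag.diagonal_diag.symm
    have hSyx : Syx = diagonal fun k => Syx k k := hSyx_diag.diagonal_diag.symm
    have hode_diag : ∀ k, HasDerivAt (fun s => ω s k k)
        (ω t k k ^ L * Syx k k - ω t k k ^ (2 * L + 1) * Sxx k k) t := by
      intro k
      convert hode t k k using 1
      rw [hω t, hSxx, hSyx]
      simp [diagonal_pow]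
    convert hasDerivAt_diagonal_apply
      (fun k => (hode_diag k).pow_of_balanced_flow hL (hpos t k)) i j using 1
    · funext s
      conv_lhs => rw [hω s]
      rw [diagonal_pow]
      rfl
    · rw [hω t, hSxx, hSyx]
      simp only [diagonal_pow, diagRpow_diagonal, diagonal_mul_diagonal, Matrix.sub_apply,
        diagonal_apply]
      split_ifs <;> simp

/-- **The balanced ansatz solves the MAE decoder equation.**
Let `Σ^{xx}, Σ^{yx}` be diagonal positive, `U` orthogonal, and let `ω(t)` be
diagonal with positive diagonal entries satisfying
`ω' = ω^L Σ^{yx} - ω^{2L+1} Σ^{xx}`.  Then `W̄(t) = U ω(t)^L` and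
`V(t) = ω(t) Uᵀ` satisfy the decoder gradient-flow equation
`d/dt V = Σ^{yx} W̄ᵀ - V W̄ Σ^{xx} W̄ᵀ`; moreover `ω̄ := ω^L` satisfies
`ω̄' = L (ω̄^{2-1/L} Σ^{yx} - ω̄³ Σ^{xx})`. -/
theorem mae_ansatz_decoder (d L : ℕ) (hd : 1 ≤ d) (hL : 1 ≤ L)
    (Sxx Syx : Matrix (Fin d) (Fin d) ℝ)
    (hSxx_diag : Sxx.IsDiag) (hSyx_diag : Syx.IsDiag)
    (hSxx_pos : ∀ i, 0 < Sxx i i) (hSyx_pos : ∀ i, 0 < Syx i i)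
    (U : Matrix (Fin d) (Fin d) ℝ) (hU_orth : Uᵀ * U = 1)
    (ω : ℝ → Matrix (Fin d) (Fin d) ℝ)
    (hdiag : ∀ t, (ω t).IsDiag) (hpos : ∀ t i, 0 < ω t i i)
    (hode : ∀ (t : ℝ) (i j : Fin d),
      HasDerivAt (fun s => ω s i j)
        ((ω t ^ L * Syx - ω t ^ (2 * L + 1) * Sxx) i j) t) :
    (∀ (t : ℝ) (i j : Fin d),
      HasDerivAt (fun s => (ω s * Uᵀ) i j)
        ((Syx * (U * ω t ^ L)ᵀ
          - (ω t * Uᵀ) * (U * ω t ^ L) * Sxx * (U * ω t ^ L)ᵀ) i j) t) ∧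
    (∀ (t : ℝ) (i j : Fin d),
      HasDerivAt (fun s => (ω s ^ L) i j)
        ((L : ℝ) *
          ((diagRpow (ω t ^ L) ((2 : ℝ) - 1 / L) * Syx
            - (ω t ^ L) ^ 3 * Sxx) i j)) t) :=
  mae_ansatz_decoder_general d L hL Sxx Syx hSxx_diag hSyx_diag U hU_orth ω hdiag hpos hode
end
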